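/- arXiv:1303.6826 — 7 statements merged into one kernel-verified Lean document; each statement's English description precedes it below -/
import Mathlib

section
/- Let X and Y be injective metric spaces and let R ⊆ X × Y be a relation with α := dis(R)/2 < ∞ such that the projection π_X(R) of R to X spans X. Then there exists a relation R̄ with R ⊆ R̄ ⊆ X × Y such that π_X(R̄) is an α-net in X and dis(R̄) = dis(R). -/
open Metric Set
open scoped ENNReal

/-- The distortion of a relation `R ⊆ X × Y`:
`dis R = sup { |d(x,x') − d(y,y')| : (x,y), (x',y') ∈ R }` (in `ℝ≥0∞`). -/
noncomputable def relDistortion {X Y : Type} [MetricSpace X] [MetricSpace Y]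
    (R : Set (X × Y)) : ℝ≥0∞ :=
  ⨆ p ∈ R, ⨆ q ∈ R, ENNReal.ofReal |dist p.1 q.1 - dist p.2 q.2|

/-- `A` spans `X`: for all `x x'`, `d(x,x') = sup_{a ∈ A} (d(x,a) − d(x',a))`. -/
def Spans {X : Type} [MetricSpace X] (A : Set X) : Prop :=
  ∀ x x' : X, IsLUB ((fun a => dist x a - dist x' a) '' A) (dist x x')

/-- A metric space `Y` is injective: for every metric space `B`, every subset `A ⊆ B`
and every 1-Lipschitz map `f : A → Y` there is a 1-Lipschitz map `g : B → Y`
extending `f`. -/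
def IsInjectiveMS (Y : Type) [MetricSpace Y] : Prop :=
  ∀ (B : Type) [MetricSpace B] (A : Set B) (f : A → Y),
    LipschitzWith 1 f → ∃ g : B → Y, LipschitzWith 1 g ∧ ∀ a : A, g a = f a

/-- Injective metric spaces are hyperconvex: any family of pairwise intersecting balls
(compatible radii) has a common point. -/
lemma exists_center_of_injective {Y : Type} [MetricSpace Y] (hY : IsInjectiveMS Y)
    (E : Set Y) (hne : E.Nonempty) (r : Y → ℝ) (hr0 : ∀ e ∈ E, 0 ≤ r e)
    (hcompat : ∀ e ∈ E, ∀ e' ∈ E, dist e e' ≤ r e + r e') :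
    ∃ y : Y, ∀ e ∈ E, dist y e ≤ r e := by
  classical
  haveI : Nonempty ↥E := hne.to_subtype
  let f : ↥E → ℝ := fun e => ⨅ e' : ↥E, (r e' + dist (e : Y) e')
  have hbdd : ∀ e : ↥E, BddBelow (Set.range fun e' : ↥E => r (e' : Y) + dist (e : Y) e') := by
    intro e
    refine ⟨0, ?_⟩
    rintro x ⟨e', rfl⟩
    exact add_nonneg (hr0 e' e'.2) dist_nonneg
  have hfle : ∀ e : ↥E, f e ≤ r e := by
    intro e
    have h := ciInf_le (hbdd e) e
    simpa using h
  have hf0 : ∀ e : ↥E, 0 ≤ f e := by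
    intro e
    exact le_ciInf fun e' => add_nonneg (hr0 e' e'.2) dist_nonneg
  have hfsum : ∀ e e' : ↥E, dist (e : Y) (e' : Y) ≤ f e + f e' := by
    intro e e'
    have h1 : dist (e : Y) (e' : Y) - f e' ≤ f e := by
      apply le_ciInf
      intro a
      have h2 : dist (e : Y) (e' : Y) - (r a + dist (e : Y) a) ≤ f e' := by
        apply le_ciInf
        intro b
        have hab := hcompat a a.2 b b.2
        have t2 := dist_triangle (e : Y) (a : Y) (b : Y)
        have t3 := dist_triangle (e : Y) (b : Y) (e' : Y)
        have t4 := dist_comm (b : Y) (e' : Y)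
        linarith
      linarith
    linarith
  have hflip : ∀ e e' : ↥E, f e ≤ f e' + dist (e : Y) e' := by
    intro e e'
    have h1 : f e - dist (e : Y) e' ≤ f e' := by
      apply le_ciInf
      intro b
      have h := ciInf_le (hbdd e) b
      have t := dist_triangle (e : Y) (e' : Y) (b : Y)
      simp only [f] at *
      linarith
    linarith
  by_cases h0 : ∃ e₀ : ↥E, f e₀ ≤ 0
  · obtain ⟨e₀, he₀⟩ := h0
    refine ⟨e₀, fun e he => ?_⟩
    have h1 := hfsum e₀ ⟨e, he⟩
    have h2 := hfle ⟨e, he⟩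
    simp only at h1 h2
    linarith
  · push_neg at h0
    let B := Option ↥E
    let D : B → B → ℝ := fun a b =>
      match a, b with
      | some a, some b => dist (a : Y) (b : Y)
      | some a, none => f a
      | none, some b => f b
      | none, none => 0
    have hDss : ∀ a b : ↥E, D (some a) (some b) = dist (a : Y) (b : Y) := fun _ _ => rfl
    have hDsn : ∀ a : ↥E, D (some a) none = f a := fun _ => rfl
    have hDns : ∀ b : ↥E, D none (some b) = f b := fun _ => rfl
    have hDnn : D none none = 0 := rfl
    have hDself : ∀ a : B, D a a = 0 := by
      rintro (_ | a)
      · rfl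
      · simp [hDss]
    have hDcomm : ∀ a b : B, D a b = D b a := by
      rintro (_ | a) (_ | b)
      · rfl
      · rfl
      · rfl
      · simpa [hDss] using dist_comm (a : Y) (b : Y)
    have hDtri : ∀ a b c : B, D a c ≤ D a b + D b c := by
      rintro (_ | a) (_ | b) (_ | c)
      · simp [hDnn]
      · simp [hDnn, hDns]
      · have := add_nonneg (hf0 b) (hf0 b)
        simp only [hDnn, hDns, hDsn]
        linarith
      · rw [hDns, hDns, hDss]
        have := hflip c b
        have := dist_comm (c : Y) (b : Y)
        linarith
      · simp [hDnn, hDsn]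
      · rw [hDss, hDsn, hDns]
        exact hfsum a c
      · rw [hDsn, hDss, hDsn]
        have := hflip a b
        linarith
      · rw [hDss, hDss, hDss]
        exact dist_triangle _ _ _
    have hDeq : ∀ a b : B, D a b = 0 → a = b := by
      rintro (_ | a) (_ | b) h
      · rfl
      · rw [hDns] at h
        exact absurd h (h0 b).ne'
      · rw [hDsn] at h
        exact absurd h (h0 a).ne'
      · rw [hDss] at h
        exact congrArg some (Subtype.ext (eq_of_dist_eq_zero h))
    letI : MetricSpace B :=
      { dist := D
        dist_self := hDself
        dist_comm := hDcomm
        dist_triangle := hDtri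
        eq_of_dist_eq_zero := fun {x y} h => hDeq x y h }
    have hdistB : ∀ a b : B, dist a b = D a b := fun _ _ => rfl
    let AB : Set B := Set.range (fun e : ↥E => (some e : B))
    let e₀ : ↥E := Classical.arbitrary ↥E
    let fmap : ↥AB → Y := fun x => (((x : B).getD e₀ : ↥E) : Y)
    have hlip : LipschitzWith 1 fmap := by
      apply LipschitzWith.of_dist_le_mul
      rintro ⟨_, a, rfl⟩ ⟨_, b, rfl⟩
      simp only [NNReal.coe_one, one_mul, Subtype.dist_eq]
      simp only [fmap, Option.getD_some]
      rw [hdistB, hDss]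
    obtain ⟨g, hg, hga⟩ := hY B AB fmap hlip
    refine ⟨g none, fun e he => ?_⟩
    have hmem : (some (⟨e, he⟩ : ↥E) : B) ∈ AB := ⟨⟨e, he⟩, rfl⟩
    have h1 : g (some ⟨e, he⟩) = e := by
      have h2 := hga ⟨some ⟨e, he⟩, hmem⟩
      simpa [fmap, Option.getD_some] using h2
    have h3 := hg.dist_le_mul none (some ⟨e, he⟩)
    rw [hdistB, hDns] at h3
    calc dist (g none) e = dist (g none) (g (some ⟨e, he⟩)) := by rw [h1]
      _ ≤ f ⟨e, he⟩ := by simpa using h3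
      _ ≤ r e := hfle ⟨e, he⟩

/-- The key pairing lemma: given a relation `M` of distortion `≤ 2α` whose first
projection contains a spanning subrelation `R`, every point `x₀` of `X` admits a pair
`(z, y)` with `d(x₀,z) ≤ α` which can be added to `M` without increasing distortion. -/
lemma key_pairing {X Y : Type} [MetricSpace X] [MetricSpace Y]
    (hX : IsInjectiveMS X) (hY : IsInjectiveMS Y)
    (R M : Set (X × Y)) (α : ℝ) (hα : 0 ≤ α) (hRM : R ⊆ M) (hRne : R.Nonempty)
    (hspan : Spans (Prod.fst '' R))
    (hdis : ∀ p ∈ M, ∀ q ∈ M, |dist p.1 q.1 - dist p.2 q.2| ≤ 2 * α)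
    (x₀ : X) :
    ∃ z y, dist x₀ z ≤ α ∧ ∀ p ∈ M, |dist z p.1 - dist y p.2| ≤ 2 * α := by
  classical
  obtain ⟨pr₀, hpr₀⟩ := hRne
  -- Step 1: find y compatible with x₀ up to one-sided slack
  let r₁ : Y → ℝ := fun q => sInf ((fun p : X => dist x₀ p + α) '' {p : X | (p, q) ∈ M})
  have hbdd₁ : ∀ q : Y, BddBelow ((fun p : X => dist x₀ p + α) '' {p : X | (p, q) ∈ M}) := by
    intro q
    refine ⟨0, ?_⟩
    rintro x ⟨p, hp, rfl⟩
    exact add_nonneg dist_nonneg hα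
  have hset_ne : ∀ q ∈ Prod.snd '' M,
      ((fun p : X => dist x₀ p + α) '' {p : X | (p, q) ∈ M}).Nonempty := by
    rintro q ⟨⟨p, q'⟩, hpq, rfl⟩
    exact ⟨dist x₀ p + α, ⟨p, hpq, rfl⟩⟩
  have hr₁_le : ∀ {p : X} {q : Y}, (p, q) ∈ M → r₁ q ≤ dist x₀ p + α := by
    intro p q h
    exact csInf_le (hbdd₁ q) ⟨p, h, rfl⟩
  have hr₁0 : ∀ q ∈ Prod.snd '' M, 0 ≤ r₁ q := by
    intro q hq
    apply le_csInf (hset_ne q hq)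
    rintro x ⟨p, hp, rfl⟩
    exact add_nonneg dist_nonneg hα
  have hcompat₁ : ∀ q ∈ Prod.snd '' M, ∀ q' ∈ Prod.snd '' M, dist q q' ≤ r₁ q + r₁ q' := by
    intro q hq q' hq'
    have h1 : dist q q' - r₁ q' ≤ r₁ q := by
      apply le_csInf (hset_ne q hq)
      rintro x ⟨p, hp, rfl⟩
      show dist q q' - r₁ q' ≤ dist x₀ p + α
      have h2 : dist q q' - (dist x₀ p + α) ≤ r₁ q' := by
        apply le_csInf (hset_ne q' hq')
        rintro x' ⟨p', hp', rfl⟩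
        show dist q q' - (dist x₀ p + α) ≤ dist x₀ p' + α
        have hd := hdis (p, q) hp (p', q') hp'
        rw [abs_le] at hd
        have ht := dist_triangle p x₀ p'
        have hc := dist_comm p x₀
        simp only at hd
        linarith [hd.1, hd.2]
      linarith
    linarith
  have hE₁ne : (Prod.snd '' M).Nonempty := ⟨pr₀.2, mem_image_of_mem _ (hRM hpr₀)⟩
  obtain ⟨y, hy⟩ := exists_center_of_injective hY (Prod.snd '' M) hE₁ne r₁ hr₁0 hcompat₁
  have hyi : ∀ {p : X} {q : Y}, (p, q) ∈ M → dist y q ≤ dist x₀ p + α := by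
    intro p q h
    exact (hy q ⟨(p, q), h, rfl⟩).trans (hr₁_le h)
  have hyii : ∀ {p : X} {q : Y}, (p, q) ∈ M → dist x₀ p - 3 * α ≤ dist y q := by
    intro p q h
    by_contra hcon
    push_neg at hcon
    set ε : ℝ := dist x₀ p - 3 * α - dist y q with hε
    have hεpos : 0 < ε := by linarith
    have hlub := hspan p x₀
    obtain ⟨c, hc, hbc, -⟩ := hlub.exists_between (show dist p x₀ - ε < dist p x₀ by linarith)
    obtain ⟨a', ha', rfl⟩ := hc
    obtain ⟨⟨a, b'⟩, hab, rfl⟩ := ha'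
    have habM : (a, b') ∈ M := hRM hab
    have hd := hdis (p, q) h (a, b') habM
    rw [abs_le] at hd
    have hyb : dist y b' ≤ dist x₀ a + α := hyi habM
    have ht : dist q b' ≤ dist q y + dist y b' := dist_triangle q y b'
    have hc1 : dist q y = dist y q := dist_comm q y
    have hc2 : dist p x₀ = dist x₀ p := dist_comm p x₀
    simp only at hd hbc
    -- hd.2 : dist p a - dist q b' ≤ 2α ; hbc : dist p x₀ - ε < dist p a - dist x₀ a
    linarith [hd.2]
  -- Step 2: find z with d(z,x₀) ≤ α and d(z,p) ≤ d(y,q) + 2α for all (p,q) ∈ M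
  let r₂ : X → ℝ := fun p =>
    if p = x₀ then α else sInf ((fun q : Y => dist y q + 2 * α) '' {q : Y | (p, q) ∈ M})
  have hbdd₂ : ∀ p : X, BddBelow ((fun q : Y => dist y q + 2 * α) '' {q : Y | (p, q) ∈ M}) := by
    intro p
    refine ⟨0, ?_⟩
    rintro x ⟨q, hq, rfl⟩
    have : (0:ℝ) ≤ 2 * α := by linarith
    exact add_nonneg dist_nonneg this
  have hset_ne₂ : ∀ p ∈ Prod.fst '' M,
      ((fun q : Y => dist y q + 2 * α) '' {q : Y | (p, q) ∈ M}).Nonempty := by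
    rintro p ⟨⟨p', q⟩, hpq, rfl⟩
    exact ⟨dist y q + 2 * α, ⟨q, hpq, rfl⟩⟩
  have hr₂0 : ∀ p ∈ insert x₀ (Prod.fst '' M), 0 ≤ r₂ p := by
    intro p hp
    by_cases hpx : p = x₀
    · simp only [r₂, if_pos hpx]; exact hα
    · simp only [r₂, if_neg hpx]
      rcases hp with hp | hp
      · exact absurd hp hpx
      · apply le_csInf (hset_ne₂ p hp)
        rintro x ⟨q, hq, rfl⟩
        have : (0:ℝ) ≤ 2 * α := by linarith
        exact add_nonneg dist_nonneg this
  have hcompat₂ : ∀ p ∈ insert x₀ (Prod.fst '' M), ∀ p' ∈ insert x₀ (Prod.fst '' M),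
      dist p p' ≤ r₂ p + r₂ p' := by
    intro p hp p' hp'
    by_cases hpx : p = x₀ <;> by_cases hpx' : p' = x₀
    · subst hpx; subst hpx'
      simp only [r₂, if_pos rfl, dist_self]
      linarith
    · have hp'M : p' ∈ Prod.fst '' M := hp'.resolve_left hpx'
      rw [hpx]
      simp only [r₂, if_pos rfl, if_neg hpx']
      have h1 : dist x₀ p' - α ≤ sInf ((fun q : Y => dist y q + 2 * α) '' {q : Y | (p', q) ∈ M}) := by
        apply le_csInf (hset_ne₂ p' hp'M)
        rintro x ⟨q, hq, rfl⟩
        show dist x₀ p' - α ≤ dist y q + 2 * α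
        have := hyii hq
        linarith
      linarith
    · have hpM : p ∈ Prod.fst '' M := hp.resolve_left hpx
      rw [hpx']
      simp only [r₂, if_neg hpx, if_pos rfl]
      have h1 : dist p x₀ - α ≤ sInf ((fun q : Y => dist y q + 2 * α) '' {q : Y | (p, q) ∈ M}) := by
        apply le_csInf (hset_ne₂ p hpM)
        rintro x ⟨q, hq, rfl⟩
        show dist p x₀ - α ≤ dist y q + 2 * α
        have := hyii hq
        have := dist_comm p x₀
        linarith
      linarith
    · simp only [r₂, if_neg hpx, if_neg hpx']
      have hpM : p ∈ Prod.fst '' M := hp.resolve_left hpx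
      have hp'M : p' ∈ Prod.fst '' M := hp'.resolve_left hpx'
      have h1 : dist p p' - sInf ((fun q : Y => dist y q + 2 * α) '' {q : Y | (p', q) ∈ M})
          ≤ sInf ((fun q : Y => dist y q + 2 * α) '' {q : Y | (p, q) ∈ M}) := by
        apply le_csInf (hset_ne₂ p hpM)
        rintro x ⟨q, hq, rfl⟩
        show dist p p' - sInf ((fun q : Y => dist y q + 2 * α) '' {q : Y | (p', q) ∈ M}) ≤ dist y q + 2 * α
        have h2 : dist p p' - (dist y q + 2 * α)
            ≤ sInf ((fun q : Y => dist y q + 2 * α) '' {q : Y | (p', q) ∈ M}) := by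
          apply le_csInf (hset_ne₂ p' hp'M)
          rintro x' ⟨q', hq', rfl⟩
          show dist p p' - (dist y q + 2 * α) ≤ dist y q' + 2 * α
          have hd := hdis (p, q) hq (p', q') hq'
          rw [abs_le] at hd
          have ht : dist q q' ≤ dist q y + dist y q' := dist_triangle q y q'
          have hc1 : dist q y = dist y q := dist_comm q y
          simp only at hd
          linarith [hd.2]
        linarith
      linarith
  obtain ⟨z, hz⟩ := exists_center_of_injective hX (insert x₀ (Prod.fst '' M))
    ⟨x₀, mem_insert _ _⟩ r₂ hr₂0 hcompat₂
  have hz₀ : dist z x₀ ≤ α := by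
    have := hz x₀ (mem_insert _ _)
    simpa [r₂] using this
  have hziv : ∀ {p : X} {q : Y}, (p, q) ∈ M → dist z p ≤ dist y q + 2 * α := by
    intro p q h
    by_cases hpx : p = x₀
    · subst hpx
      have := dist_nonneg (x := y) (y := q)
      linarith
    · have h1 := hz p (mem_insert_of_mem _ ⟨(p, q), h, rfl⟩)
      simp only [r₂, if_neg hpx] at h1
      exact h1.trans (csInf_le (hbdd₂ p) ⟨q, h, rfl⟩)
  refine ⟨z, y, by rw [dist_comm]; exact hz₀, ?_⟩
  rintro ⟨p, q⟩ h
  rw [abs_le]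
  constructor
  · -- dist y q ≤ dist z p + 2α
    have h1 : dist y q ≤ dist x₀ p + α := hyi h
    have h2 : dist x₀ p ≤ dist x₀ z + dist z p := dist_triangle x₀ z p
    have h3 : dist x₀ z = dist z x₀ := dist_comm x₀ z
    simp only
    linarith
  · simp only
    have := hziv h
    linarith

/-- Proposition 2.1: extension of a relation between injective metric spaces to one
whose first projection is an `α`-net, without increasing the distortion. -/
theorem relation_extension_injective {X Y : Type} [MetricSpace X] [MetricSpace Y]
    (hX : IsInjectiveMS X) (hY : IsInjectiveMS Y)
    (R : Set (X × Y)) (hfin : relDistortion R < ⊤)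
    (hspan : Spans (Prod.fst '' R)) :
    ∃ Rbar : Set (X × Y), R ⊆ Rbar ∧
      (∀ x : X, ∃ z ∈ Prod.fst '' Rbar, dist x z ≤ (relDistortion R / 2).toReal) ∧
      relDistortion Rbar = relDistortion R := by
  classical
  rcases isEmpty_or_nonempty X with hXe | hXne
  · exact ⟨R, subset_rfl, fun x => (IsEmpty.false x).elim, rfl⟩
  set d₀ : ℝ := (relDistortion R).toReal with hd₀
  have hd₀0 : 0 ≤ d₀ := ENNReal.toReal_nonneg
  have hαval : (relDistortion R / 2).toReal = d₀ / 2 := by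
    rw [ENNReal.toReal_div, ← hd₀]
    norm_num
  have habsR : ∀ p ∈ R, ∀ q ∈ R, |dist p.1 q.1 - dist p.2 q.2| ≤ d₀ := by
    intro p hp q hq
    have h2 : ENNReal.ofReal |dist p.1 q.1 - dist p.2 q.2|
        ≤ ⨆ q' ∈ R, ENNReal.ofReal |dist p.1 q'.1 - dist p.2 q'.2| :=
      le_iSup₂ (f := fun q' (_ : q' ∈ R) => ENNReal.ofReal |dist p.1 q'.1 - dist p.2 q'.2|) q hq
    have h3 : (⨆ q' ∈ R, ENNReal.ofReal |dist p.1 q'.1 - dist p.2 q'.2|) ≤ relDistortion R :=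
      le_iSup₂ (f := fun p' (_ : p' ∈ R) =>
        ⨆ q' ∈ R, ENNReal.ofReal |dist p'.1 q'.1 - dist p'.2 q'.2|) p hp
    exact (ENNReal.ofReal_le_iff_le_toReal hfin.ne).mp (h2.trans h3)
  have hRne : R.Nonempty := by
    rcases Set.eq_empty_or_nonempty R with hre | h
    · exfalso
      obtain ⟨x⟩ := hXne
      have h := (hspan x x).2
      have hub : (-1 : ℝ) ∈ upperBounds ((fun a => dist x a - dist x a) '' (Prod.fst '' R)) := by
        rw [hre]
        simp [upperBounds]
      have h2 := h hub
      rw [dist_self] at h2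
      linarith
    · exact h
  -- Zorn's lemma
  set P : Set (Set (X × Y)) :=
    {S | R ⊆ S ∧ ∀ p ∈ S, ∀ q ∈ S, |dist p.1 q.1 - dist p.2 q.2| ≤ d₀} with hP
  have hRP : R ∈ P := ⟨subset_rfl, habsR⟩
  obtain ⟨M, hRM, hMmax⟩ := zorn_subset_nonempty P (fun c hc hchain hcne => by
    refine ⟨⋃₀ c, ⟨?_, ?_⟩, fun s hs => subset_sUnion_of_mem hs⟩
    · obtain ⟨s, hs⟩ := hcne
      exact (hc hs).1.trans (subset_sUnion_of_mem hs)
    · rintro p ⟨s, hs, hps⟩ q ⟨t, ht, hqt⟩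
      rcases hchain.total hs ht with hst | hts
      · exact (hc ht).2 p (hst hps) q hqt
      · exact (hc hs).2 p hps q (hts hqt)) R hRP
  have hMP : M ∈ P := hMmax.prop
  refine ⟨M, hRM, ?_, ?_⟩
  · -- net condition
    intro x
    have hMdis : ∀ p ∈ M, ∀ q ∈ M, |dist p.1 q.1 - dist p.2 q.2| ≤ 2 * (d₀ / 2) := by
      intro p hp q hq
      have := hMP.2 p hp q hq
      linarith
    obtain ⟨z, y, hzx, hzy⟩ := key_pairing hX hY R M (d₀ / 2) (by linarith) hRM hRne hspan hMdis x
    have hM' : M ∪ {(z, y)} ∈ P := by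
      constructor
      · exact hMP.1.trans subset_union_left
      · rintro p (hp | hp) q (hq | hq)
        · exact hMP.2 p hp q hq
        · rw [mem_singleton_iff] at hq
          subst hq
          have h := hzy p hp
          rw [dist_comm z p.1, dist_comm y p.2] at h
          show |dist p.1 z - dist p.2 y| ≤ d₀
          linarith [h]
        · rw [mem_singleton_iff] at hp
          subst hp
          have h := hzy q hq
          show |dist z q.1 - dist y q.2| ≤ d₀
          linarith [h]
        · rw [mem_singleton_iff] at hp hq
          subst hp; subst hq
          simp [hd₀0]
    have hsub : M ∪ {(z, y)} ⊆ M := hMmax.2 hM' subset_union_left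
    have hzyM : (z, y) ∈ M := hsub (Or.inr rfl)
    refine ⟨z, ⟨(z, y), hzyM, rfl⟩, ?_⟩
    rw [hαval]
    exact hzx
  · -- distortion equality
    apply le_antisymm
    · calc relDistortion M ≤ ENNReal.ofReal d₀ := by
            apply iSup₂_le
            intro p hp
            apply iSup₂_le
            intro q hq
            exact ENNReal.ofReal_le_ofReal (hMP.2 p hp q hq)
        _ = relDistortion R := ENNReal.ofReal_toReal hfin.ne
    · apply iSup₂_le
      intro p hp
      apply iSup₂_le
      intro q hq
      have h2 : ENNReal.ofReal |dist p.1 q.1 - dist p.2 q.2|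
          ≤ ⨆ q' ∈ M, ENNReal.ofReal |dist p.1 q'.1 - dist p.2 q'.2| :=
        le_iSup₂ (f := fun q' (_ : q' ∈ M) => ENNReal.ofReal |dist p.1 q'.1 - dist p.2 q'.2|) q (hRM hq)
      have h3 : (⨆ q' ∈ M, ENNReal.ofReal |dist p.1 q'.1 - dist p.2 q'.2|) ≤ relDistortion M :=
        le_iSup₂ (f := fun p' (_ : p' ∈ M) =>
          ⨆ q' ∈ M, ENNReal.ofReal |dist p'.1 q'.1 - dist p'.2 q'.2|) p (hRM hp)
      exact h2.trans h3
end

section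
/- Let X and Y be injective metric spaces, let R ⊆ X × Y be a relation with α := dis(R)/2 < ∞ such that π_X(R) spans X, and let x̄ ∈ X. Then there exists a pair (x₀, y₀) ∈ X × Y such that d(x̄, x₀) ≤ α and dis(R ∪ {(x₀, y₀)}) = dis(R). -/
/-!
Injective metric spaces are hyperconvex: pairwise compatible closed balls have a common point
(adjoin a point at distance `inf_i (r i + d(·, c i))` to `Y` and extend the identity).
First choose `y₀` with `d(y₀, y) ≤ d(x̄, x) + α` for all `(x, y) ∈ R`. Since `π_X(R)` spans `X`,
this forces `d(x̄, x) ≤ d(y₀, y) + 3α`, which is exactly what makes the balls `B(x̄, α)` and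
`B(x, d(y₀, y) + 2α)` pairwise compatible; a common point `x₀` of them gives
`|d(x₀, x) - d(y₀, y)| ≤ 2α` on `R`.
-/

open Metric Set
open scoped ENNReal

section OnePointExtension

variable {Y : Type} [MetricSpace Y]

abbrev optionMetricSpace (ρ : Y → ℝ) (hpos : ∀ y, 0 < ρ y)
    (hlip : ∀ y y', ρ y ≤ ρ y' + dist y y') (hsum : ∀ y y', dist y y' ≤ ρ y + ρ y') :
    MetricSpace (Option Y) where
  dist
    | none, none => 0
    | none, some y => ρ y
    | some y, none => ρ y
    | some y, some y' => dist y y'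
  dist_self := by rintro (_ | y) <;> simp
  dist_comm := by rintro (_ | y) (_ | y') <;> simp [dist_comm]
  dist_triangle := by
    rintro (_ | a) (_ | b) (_ | c)
    · exact (add_zero 0).ge
    · exact (zero_add _).ge
    · exact (add_pos (hpos b) (hpos b)).le
    · exact (hlip c b).trans_eq (by rw [dist_comm])
    · exact (add_zero _).ge
    · exact hsum a c
    · exact (hlip a b).trans_eq (add_comm _ _)
    · exact dist_triangle a b c
  eq_of_dist_eq_zero := by
    rintro (_ | a) (_ | b) hab
    · rfl
    · exact absurd hab (hpos b).ne'
    · exact absurd hab (hpos a).ne'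
    · exact congrArg some (dist_eq_zero.1 hab)

theorem IsInjectiveMS.nonempty (hY : IsInjectiveMS Y) : Nonempty Y := by
  obtain ⟨g, -, -⟩ := hY Unit ∅ isEmptyElim (LipschitzWith.of_dist_le_mul isEmptyElim)
  exact ⟨g ()⟩

theorem IsInjectiveMS.exists_forall_dist_le_of_pos (hY : IsInjectiveMS Y) (ρ : Y → ℝ)
    (hpos : ∀ y, 0 < ρ y) (hlip : ∀ y y', ρ y ≤ ρ y' + dist y y')
    (hsum : ∀ y y', dist y y' ≤ ρ y + ρ y') : ∃ y₀, ∀ y, dist y₀ y ≤ ρ y := by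
  let := optionMetricSpace ρ hpos hlip hsum
  let e := Equiv.ofInjective some (Option.some_injective Y)
  have he : Isometry e.symm := Isometry.of_dist_eq fun ⟨_, y, hy⟩ ⟨_, y', hy'⟩ => by
    subst hy hy'
    simp only [e, Equiv.ofInjective_symm_apply]
    rfl
  obtain ⟨g, hg, hge⟩ := hY (Option Y) (range some) e.symm he.lipschitz
  refine ⟨g none, fun y => ?_⟩
  calc dist (g none) y = dist (g none) (g (some y)) := by
        rw [hge ⟨some y, y, rfl⟩, Equiv.ofInjective_symm_apply]
    _ ≤ dist (none : Option Y) (some y) := by simpa using hg.dist_le_mul none (some y)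
    _ = ρ y := rfl

end OnePointExtension

section Hyperconvexity

variable {Y ι : Type} [MetricSpace Y] (c : ι → Y) (r : ι → ℝ)

noncomputable def ballGauge (z : Y) : ℝ := ⨅ i, (r i + dist z (c i))

variable {c r}

theorem ballGauge_le (hr : ∀ i, 0 ≤ r i) (z : Y) (i : ι) :
    ballGauge c r z ≤ r i + dist z (c i) :=
  ciInf_le ⟨0, by rintro _ ⟨j, rfl⟩; exact add_nonneg (hr j) dist_nonneg⟩ i

theorem ballGauge_le_add_dist [Nonempty ι] (hr : ∀ i, 0 ≤ r i) (z z' : Y) :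
    ballGauge c r z ≤ ballGauge c r z' + dist z z' := by
  have : ballGauge c r z - dist z z' ≤ ballGauge c r z' := le_ciInf fun i => by
    linarith [ballGauge_le (c := c) hr z i, dist_triangle z z' (c i)]
  linarith

theorem dist_le_ballGauge_add [Nonempty ι] (h : ∀ i j, dist (c i) (c j) ≤ r i + r j) (z z' : Y) :
    dist z z' ≤ ballGauge c r z + ballGauge c r z' := by
  have : dist z z' - ballGauge c r z ≤ ballGauge c r z' := le_ciInf fun j => by
    have : dist z z' - (r j + dist z' (c j)) ≤ ballGauge c r z := le_ciInf fun i => by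
      linarith [h i j, dist_triangle4 z (c i) (c j) z', dist_comm z' (c j)]
    linarith
  linarith

theorem dist_le_of_ballGauge_nonpos [Nonempty ι] (h : ∀ i j, dist (c i) (c j) ≤ r i + r j)
    {z : Y} (hz : ballGauge c r z ≤ 0) (j : ι) : dist z (c j) ≤ r j := by
  refine le_of_forall_pos_le_add fun ε hε => ?_
  obtain ⟨i, hi⟩ := exists_lt_of_ciInf_lt (hz.trans_lt hε)
  linarith [h i j, dist_triangle z (c i) (c j)]

theorem IsInjectiveMS.exists_forall_dist_le (hY : IsInjectiveMS Y) (hr : ∀ i, 0 ≤ r i)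
    (h : ∀ i j, dist (c i) (c j) ≤ r i + r j) : ∃ y, ∀ i, dist y (c i) ≤ r i := by
  rcases isEmpty_or_nonempty ι with hι | hι
  · obtain ⟨y⟩ := hY.nonempty
    exact ⟨y, isEmptyElim⟩
  by_cases hnonpos : ∃ z, ballGauge c r z ≤ 0
  · obtain ⟨z, hz⟩ := hnonpos
    exact ⟨z, dist_le_of_ballGauge_nonpos h hz⟩
  push Not at hnonpos
  obtain ⟨y, hy⟩ := hY.exists_forall_dist_le_of_pos _ hnonpos (ballGauge_le_add_dist hr)
    (dist_le_ballGauge_add h)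
  exact ⟨y, fun i => (hy (c i)).trans (by simpa using ballGauge_le (c := c) hr (c i) i)⟩

theorem IsInjectiveMS.exists_dist_le_forall_dist_le (hY : IsInjectiveMS Y) {c₀ : Y} {r₀ : ℝ}
    (hr₀ : 0 ≤ r₀) (hr : ∀ i, 0 ≤ r i) (h₀ : ∀ i, dist c₀ (c i) ≤ r₀ + r i)
    (h : ∀ i j, dist (c i) (c j) ≤ r i + r j) :
    ∃ y, dist y c₀ ≤ r₀ ∧ ∀ i, dist y (c i) ≤ r i := by
  obtain ⟨y, hy⟩ := hY.exists_forall_dist_le (c := fun o : Option ι => o.elim c₀ c)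
    (r := fun o => o.elim r₀ r) (by rintro (_ | i) <;> simp [hr₀, hr])
    (by
      rintro (_ | i) (_ | j)
      · simpa using add_nonneg hr₀ hr₀
      · exact h₀ j
      · simpa [dist_comm, add_comm] using h₀ i
      · exact h i j)
  exact ⟨y, hy none, fun i => hy (some i)⟩

end Hyperconvexity

section Distortion

variable {X Y : Type} [MetricSpace X] [MetricSpace Y] {R : Set (X × Y)}

theorem abs_dist_sub_dist_le_relDistortion (hfin : relDistortion R ≠ ⊤) {p q : X × Y}
    (hp : p ∈ R) (hq : q ∈ R) : |dist p.1 q.1 - dist p.2 q.2| ≤ (relDistortion R).toReal := by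
  rw [← ENNReal.ofReal_le_iff_le_toReal hfin]
  exact le_iSup₂_of_le p hp (le_iSup₂_of_le q hq le_rfl)

theorem relDistortion_insert_of_forall_le (hfin : relDistortion R ≠ ⊤) {x₀ : X} {y₀ : Y}
    (h : ∀ p ∈ R, |dist x₀ p.1 - dist y₀ p.2| ≤ (relDistortion R).toReal) :
    relDistortion (insert (x₀, y₀) R) = relDistortion R := by
  refine le_antisymm (iSup₂_le fun p hp => iSup₂_le fun q hq => ?_)
    (iSup₂_le fun p hp => iSup₂_le fun q hq =>
      le_iSup₂_of_le p (subset_insert _ _ hp) (le_iSup₂_of_le q (subset_insert _ _ hq) le_rfl))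
  rw [ENNReal.ofReal_le_iff_le_toReal hfin]
  rcases hp with rfl | hp <;> rcases hq with rfl | hq
  · simp
  · exact h q hq
  · simpa [dist_comm] using h p hp
  · exact abs_dist_sub_dist_le_relDistortion hfin hp hq

end Distortion

theorem Spans.dist_le {X : Type} [MetricSpace X] {A : Set X} (hA : Spans A) {x x' : X} {b : ℝ}
    (h : ∀ a ∈ A, dist x a - dist x' a ≤ b) : dist x x' ≤ b :=
  (hA x x').2 (forall_mem_image.2 h)

/-- One-point extension step for relations between injective metric spaces. -/
theorem relation_one_point_extension_injective {X Y : Type} [MetricSpace X] [MetricSpace Y]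
    (hX : IsInjectiveMS X) (hY : IsInjectiveMS Y)
    (R : Set (X × Y)) (hfin : relDistortion R < ⊤)
    (hspan : Spans (Prod.fst '' R)) (xbar : X) :
    ∃ (x₀ : X) (y₀ : Y), dist xbar x₀ ≤ (relDistortion R / 2).toReal ∧
      relDistortion (insert (x₀, y₀) R) = relDistortion R := by
  set D := (relDistortion R).toReal
  have hD : 0 ≤ D := ENNReal.toReal_nonneg
  have hR : ∀ p ∈ R, ∀ q ∈ R, dist p.1 q.1 ≤ dist p.2 q.2 + D ∧ dist p.2 q.2 ≤ dist p.1 q.1 + D :=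
    fun p hp q hq => by
      have := abs_le.1 (abs_dist_sub_dist_le_relDistortion hfin.ne hp hq)
      constructor <;> linarith
  obtain ⟨y₀, hy₀⟩ := hY.exists_forall_dist_le (c := fun p : R => p.1.2)
    (r := fun p => dist xbar p.1.1 + D / 2) (fun _ => by positivity) fun p q => by
      linarith [(hR p.1 p.2 q.1 q.2).2, dist_triangle_left p.1.1 q.1.1 xbar]
  have hlow : ∀ p ∈ R, dist xbar p.1 ≤ dist y₀ p.2 + 3 * (D / 2) := fun p hp => by
    rw [dist_comm]
    refine hspan.dist_le ?_
    rintro _ ⟨q, hq, rfl⟩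
    linarith [(hR p hp q hq).1, hy₀ ⟨q, hq⟩, dist_triangle_left p.2 q.2 y₀]
  obtain ⟨x₀, hx₀, hx₀R⟩ := hX.exists_dist_le_forall_dist_le (c₀ := xbar) (r₀ := D / 2)
    (c := fun p : R => p.1.1) (r := fun p => dist y₀ p.1.2 + D) (by positivity)
    (fun _ => by positivity) (fun p => by linarith [hlow p.1 p.2]) fun p q => by
      linarith [(hR p.1 p.2 q.1 q.2).1, dist_triangle_left p.1.2 q.1.2 y₀]
  refine ⟨x₀, y₀, ?_, relDistortion_insert_of_forall_le hfin.ne fun p hp => abs_le.2 ⟨?_, ?_⟩⟩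
  · rw [ENNReal.toReal_div, dist_comm]
    simpa using hx₀
  · linarith [hy₀ ⟨p, hp⟩, dist_triangle xbar x₀ p.1, dist_comm xbar x₀]
  · linarith [hx₀R ⟨p, hp⟩]
end

section
/- Let X and Y be injective metric spaces, let A ⊆ X be a set that spans X, and let f : A → Y be an ε-roughly isometric map for some ε ≥ 0. Then f admits an ε-roughly isometric extension f̄ : S → Y to some ε/2-net S in X containing A, and hence also a 2ε-roughly isometric extension f̂ : X → Y defined on all of X. -/
open Metric Set
open scoped ENNReal

/-- `f` is `ε`-roughly isometric: `|d(f x, f x') − d(x, x')| ≤ ε` for all `x, x'`. -/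
def RoughIsom {X Y : Type} [MetricSpace X] [MetricSpace Y] (ε : ℝ) (f : X → Y) : Prop :=
  ∀ x x' : X, |dist (f x) (f x') - dist x x'| ≤ ε

/-- Injective metric spaces are hyperconvex. -/
theorem inj_hyperconvex {Y : Type} [MetricSpace Y] (hY : IsInjectiveMS Y)
    {I : Type} [Nonempty I] (y : I → Y) (r : I → ℝ)
    (h : ∀ i j, dist (y i) (y j) ≤ r i + r j) :
    ∃ c : Y, ∀ i, dist c (y i) ≤ r i := by
  classical
  by_cases hc : ∃ c : Y, ∀ i, dist c (y i) ≤ r i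
  · exact hc
  exfalso
  push_neg at hc
  have hr : ∀ i, 0 ≤ r i := fun i => by have := h i i; simp at this; linarith
  set ρ : Y → ℝ := fun p => ⨅ i, (r i + dist (y i) p) with hrho
  have hbdd : ∀ p : Y, BddBelow (Set.range fun i => r i + dist (y i) p) := fun p =>
    ⟨0, by rintro _ ⟨i, rfl⟩; exact add_nonneg (hr i) dist_nonneg⟩
  have hle : ∀ (p : Y) (i : I), ρ p ≤ r i + dist (y i) p := fun p i => ciInf_le (hbdd p) i
  have hnn : ∀ p : Y, 0 ≤ ρ p := fun p =>
    le_ciInf fun i => add_nonneg (hr i) dist_nonneg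
  have hpos : ∀ p : Y, 0 < ρ p := by
    intro p
    rcases (hnn p).lt_or_eq with h' | h'
    · exact h'
    exfalso
    obtain ⟨i, hi⟩ := hc p
    have hlt : ρ p < (dist p (y i) - r i) / 2 := by rw [← h']; linarith
    obtain ⟨j, hj⟩ := exists_lt_of_ciInf_lt hlt
    have h1 : dist p (y i) ≤ dist p (y j) + dist (y j) (y i) := dist_triangle _ _ _
    have h2 := h j i
    have h3 := dist_comm p (y j)
    linarith
  have factA : ∀ p q : Y, ρ q ≤ ρ p + dist p q := by
    intro p q
    refine le_of_forall_pos_le_add ?_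
    intro δ hδ
    obtain ⟨i, hi⟩ := exists_lt_of_ciInf_lt (show ρ p < ρ p + δ by linarith)
    have h1 := hle q i
    have h2 := dist_triangle (y i) p q
    linarith
  have factB : ∀ p q : Y, dist p q ≤ ρ p + ρ q := by
    intro p q
    have h1 : ∀ i, dist p q - ρ q ≤ r i + dist (y i) p := by
      intro i
      have h2 : dist p q - (r i + dist (y i) p) ≤ ρ q := le_ciInf fun j => by
        have t := dist_triangle4 p (y i) (y j) q
        have := h i j
        have := dist_comm (y i) p
        linarith
      linarith
    have h3 := le_ciInf h1
    linarith
  letI : MetricSpace (Option Y) :=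
    { dist := fun a b =>
        match a, b with
        | none, none => 0
        | none, some p => ρ p
        | some p, none => ρ p
        | some p, some q => dist p q
      dist_self := fun a => by cases a <;> simp [dist_self]
      dist_comm := fun a b => by
        cases a <;> cases b <;> simp [dist_comm]
      dist_triangle := fun a b c => by
        rcases a with _ | p <;> rcases b with _ | q <;> rcases c with _ | s
        · show (0:ℝ) ≤ 0 + 0; norm_num
        · show ρ s ≤ 0 + ρ s; linarith [hnn s]
        · show (0:ℝ) ≤ ρ q + ρ q; linarith [hnn q]
        · show ρ s ≤ ρ q + dist q s; exact factA q s
        · show ρ p ≤ ρ p + 0; linarith [hnn p]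
        · show dist p s ≤ ρ p + ρ s; exact factB p s
        · show ρ p ≤ dist p q + ρ q
          have := factA q p
          rw [dist_comm]
          linarith
        · exact dist_triangle p q s
      eq_of_dist_eq_zero := by
        intro a b
        rcases a with _ | p <;> rcases b with _ | q
        · exact fun _ => rfl
        · exact fun h' => absurd h' (hpos q).ne'
        · exact fun h' => absurd h' (hpos p).ne'
        · exact fun h' => congrArg some (eq_of_dist_eq_zero h') }
  obtain ⟨g, hg, hge⟩ := hY (Option Y) (Set.range Option.some)
    (fun a => Option.getD a.1 (y (Classical.arbitrary I)))
    (LipschitzWith.of_dist_le_mul (by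
      rintro ⟨_, pa, rfl⟩ ⟨_, pb, rfl⟩
      simp only [NNReal.coe_one, one_mul]
      exact le_of_eq rfl))
  obtain ⟨i, hi⟩ := hc (g none)
  have h1 : g (some (y i)) = y i := hge ⟨some (y i), ⟨y i, rfl⟩⟩
  have h2 : dist (g none) (g (some (y i))) ≤ 1 * dist (none : Option Y) (some (y i)) :=
    hg.dist_le_mul _ _
  have h3 : dist (none : Option Y) (some (y i)) = ρ (y i) := rfl
  have h4 := hle (y i) i
  rw [h1, h3, one_mul] at h2
  simp [dist_self] at h4
  linarith

/-- An `ε`-roughly isometric map on a spanning subset of an injective metric space,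
into an injective metric space, extends `ε`-roughly isometrically to an `ε/2`-net
and `2ε`-roughly isometrically to the whole space. -/
theorem rough_isometry_extension_injective {X Y : Type} [MetricSpace X] [MetricSpace Y]
    (hX : IsInjectiveMS X) (hY : IsInjectiveMS Y)
    (A : Set X) (hA : Spans A) (ε : ℝ) (hε : 0 ≤ ε)
    (f : A → Y) (hf : RoughIsom ε f) :
    (∃ (S : Set X) (hAS : A ⊆ S), (∀ x : X, ∃ z ∈ S, dist x z ≤ ε / 2) ∧
      ∃ fbar : S → Y, RoughIsom ε fbar ∧ ∀ a : A, fbar (Set.inclusion hAS a) = f a) ∧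
    ∃ fhat : X → Y, RoughIsom (2 * ε) fhat ∧ ∀ a : A, fhat a = f a := by
  classical
  rcases isEmpty_or_nonempty X with hXe | hXne
  · refine ⟨⟨∅, fun a ha => isEmptyElim a, fun x => isEmptyElim x,
      fun s => isEmptyElim (s : X), fun s => isEmptyElim (s : X),
      fun a => isEmptyElim (a : X)⟩,
      fun x => isEmptyElim x, fun x => isEmptyElim x, fun a => isEmptyElim (a : X)⟩
  -- A is nonempty
  have hAne : A.Nonempty := by
    by_contra hA0
    rw [Set.not_nonempty_iff_eq_empty] at hA0
    obtain ⟨x⟩ := hXne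
    have h1 : dist x x ≤ dist x x - 1 := (hA x x).2 (by
      intro c hc
      rw [hA0, Set.image_empty] at hc
      exact absurd hc (Set.notMem_empty c))
    linarith
  obtain ⟨a0, ha0⟩ := hAne
  -- the collection of good graphs
  set Good : Set (X × Y) → Prop := fun G =>
    (∀ a : A, ((a : X), f a) ∈ G) ∧
    (∀ p ∈ G, ∀ q ∈ G, p.1 = q.1 → p.2 = q.2) ∧
    (∀ p ∈ G, ∀ q ∈ G, |dist p.2 q.2 - dist p.1 q.1| ≤ ε) with hGoodDef
  have hG0 : Good (Set.range (fun a : A => ((a : X), f a))) := by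
    refine ⟨fun a => ⟨a, rfl⟩, ?_, ?_⟩
    · rintro _ ⟨a, rfl⟩ _ ⟨a', rfl⟩ h1
      rw [Subtype.ext h1]
    · rintro _ ⟨a, rfl⟩ _ ⟨a', rfl⟩
      exact hf a a'
  obtain ⟨G, hG0G, hGmax⟩ := zorn_subset_nonempty {G | Good G} (by
      intro c hcS hchain hcne
      refine ⟨⋃₀ c, ⟨?_, ?_, ?_⟩, fun s hs => subset_sUnion_of_mem hs⟩
      · obtain ⟨G1, hG1⟩ := hcne
        exact fun a => ⟨G1, hG1, (hcS hG1).1 a⟩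
      · rintro p ⟨G1, hG1c, hp⟩ q ⟨G2, hG2c, hq⟩ he
        rcases hchain.total hG1c hG2c with h12 | h21
        · exact (hcS hG2c).2.1 p (h12 hp) q hq he
        · exact (hcS hG1c).2.1 p hp q (h21 hq) he
      · rintro p ⟨G1, hG1c, hp⟩ q ⟨G2, hG2c, hq⟩
        rcases hchain.total hG1c hG2c with h12 | h21
        · exact (hcS hG2c).2.2 p (h12 hp) q hq
        · exact (hcS hG1c).2.2 p hp q (h21 hq))
    _ hG0
  obtain ⟨hgr, hfun, hrough⟩ := hGmax.prop
  set S : Set X := Prod.fst '' G with hSdef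
  have hAS : A ⊆ S := fun a ha => ⟨(a, f ⟨a, ha⟩), hgr ⟨a, ha⟩, rfl⟩
  set F : X → Y := fun x => if h : ∃ yy, (x, yy) ∈ G then h.choose else f ⟨a0, ha0⟩ with hFdef
  have hSmem : ∀ x ∈ S, (x, F x) ∈ G := by
    rintro _ ⟨p, hp, rfl⟩
    have h : ∃ yy, (p.1, yy) ∈ G := ⟨p.2, hp⟩
    simp only [hFdef, dif_pos h]
    exact h.choose_spec
  have hFval : ∀ p ∈ G, F p.1 = p.2 := fun p hp =>
    hfun _ (hSmem p.1 ⟨p, hp, rfl⟩) p hp rfl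
  have hFa : ∀ a : A, F a = f a := fun a => hFval _ (hgr a)
  have hSrough : ∀ x ∈ S, ∀ x' ∈ S, |dist (F x) (F x') - dist x x'| ≤ ε :=
    fun x hx x' hx' => hrough _ (hSmem x hx) _ (hSmem x' hx')
  -- S is an ε/2-net
  have hnet : ∀ x : X, ∃ z ∈ S, dist x z ≤ ε / 2 := by
    by_contra hno
    push_neg at hno
    obtain ⟨x, hx⟩ := hno
    haveI : Nonempty ↥S := ⟨⟨a0, hAS ha0⟩⟩
    -- choose the value y via hyperconvexity in Y
    obtain ⟨yc, hyc⟩ := inj_hyperconvex hY (fun s : S => F s)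
        (fun s : S => dist x s + ε / 2) (by
      intro i j
      have h1 := abs_le.mp (hSrough i i.2 j j.2)
      have h2 := dist_triangle (i : X) x (j : X)
      have h3 := dist_comm (i : X) x
      have h4 : dist (i : X) (j : X) = dist i j := rfl
      linarith)
    -- lower bound via spanning
    have hlow : ∀ s : S, dist (s : X) x ≤ dist yc (F s) + (ε / 2 + ε) := by
      intro s
      refine (hA (s : X) x).2 ?_
      rintro _ ⟨a, haA, rfl⟩
      have h1 : dist yc (F a) ≤ dist x a + ε / 2 := hyc ⟨a, hAS haA⟩
      have h2 := abs_le.mp (hSrough (s : X) s.2 a (hAS haA))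
      have h4 := dist_triangle (F (s : X)) yc (F a)
      have h5 := dist_comm (F (s : X)) yc
      linarith
    -- choose the point z via hyperconvexity in X
    obtain ⟨z, hz⟩ := inj_hyperconvex hX
        (fun o : Option ↥S => o.elim x (fun s => (s : X)))
        (fun o : Option ↥S => o.elim (ε / 2) (fun s => dist yc (F s) + ε)) (by
      rintro (_ | i) (_ | j)
      · simp [dist_self]; linarith
      · have := hlow j
        have := dist_comm x (j : X)
        simp only [Option.elim]
        linarith
      · have := hlow i
        simp only [Option.elim]
        linarith
      · have h1 := abs_le.mp (hSrough i i.2 j j.2)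
        have h2 := dist_triangle (F (i : X)) yc (F (j : X))
        have h3 := dist_comm (F (i : X)) yc
        have h4 : dist (i : X) (j : X) = dist i j := rfl
        simp only [Option.elim]
        linarith)
    have hzx : dist z x ≤ ε / 2 := hz none
    have hzs : ∀ s : ↥S, dist z (s : X) ≤ dist yc (F s) + ε := fun s => hz (some s)
    have hzS : z ∉ S := by
      intro hmem
      have := hx z hmem
      rw [dist_comm] at hzx
      linarith
    -- extend the graph : contradiction with maximality
    have hGood' : Good (insert (z, yc) G) := by
      refine ⟨fun a => Set.mem_insert_of_mem _ (hgr a), ?_, ?_⟩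
      · rintro p (rfl | hp) q (rfl | hq)
        · intro; rfl
        · intro he
          exact absurd (show z ∈ S from ⟨q, hq, he.symm⟩) hzS
        · intro he
          exact absurd (show z ∈ S from ⟨p, hp, he⟩) hzS
        · exact hfun p hp q hq
      · have key : ∀ q ∈ G, |dist yc q.2 - dist z q.1| ≤ ε := by
          intro q hq
          have hq1 : q.1 ∈ S := ⟨q, hq, rfl⟩
          have hq2 : F q.1 = q.2 := hFval q hq
          have h1 : dist yc (F q.1) ≤ dist x q.1 + ε / 2 := hyc ⟨q.1, hq1⟩
          have h2 : dist z q.1 ≤ dist yc (F q.1) + ε := hzs ⟨q.1, hq1⟩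
          have h3 := dist_triangle x z q.1
          have h4 := dist_comm x z
          rw [← hq2, abs_le]
          constructor <;> linarith
        rintro p (rfl | hp) q (rfl | hq)
        · simp [dist_self, hε]
        · exact key q hq
        · have hthis := key p hp
          rw [dist_comm yc p.2, dist_comm z p.1] at hthis
          exact hthis
        · exact hrough p hp q hq
    have hsub : insert (z, yc) G ⊆ G := hGmax.2 hGood' (Set.subset_insert _ _)
    exact hzS ⟨(z, yc), hsub (Set.mem_insert _ _), rfl⟩
  -- assemble
  constructor
  · refine ⟨S, hAS, hnet, fun s => F s, ?_, ?_⟩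
    · intro s s'
      exact hSrough s s.2 s' s'.2
    · intro a
      exact hFa a
  · have key : ∀ x : X, ∃ z ∈ S, dist x z ≤ ε / 2 ∧ (x ∈ S → z = x) := by
      intro x
      by_cases hx : x ∈ S
      · exact ⟨x, hx, by rw [dist_self]; linarith, fun _ => rfl⟩
      · obtain ⟨z, hz1, hz2⟩ := hnet x
        exact ⟨z, hz1, hz2, fun hxS => absurd hxS hx⟩
    choose w hwS hwd hwid using key
    refine ⟨fun x => F (w x), ?_, ?_⟩
    · intro x x'
      show |dist (F (w x)) (F (w x')) - dist x x'| ≤ 2 * ε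
      have h1 := abs_le.mp (hSrough _ (hwS x) _ (hwS x'))
      have t1 := dist_triangle4 (w x) x x' (w x')
      have t2 := dist_triangle4 x (w x) (w x') x'
      have c1 := dist_comm (w x) x
      have c2 := dist_comm (w x') x'
      have d1 := hwd x
      have d2 := hwd x'
      rw [abs_le]
      constructor <;> linarith
    · intro a
      show F (w (a : X)) = f a
      rw [hwid (a : X) (hAS a.2)]
      exact hFa a
end

section
/- Let X be a metric tree, Y an injective metric space, A ⊆ X a set that strictly spans X, and f : A → Y an ε-roughly isometric map for some ε ≥ 0. Then f admits an ε-roughly isometric extension f̄ : X → Y defined on all of X. -/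
open Metric Set
open scoped ENNReal

/-- `A` strictly spans `X`: for all `x x'` there is `a ∈ A` with
`d(x,x') + d(x',a) = d(x,a)`. -/
def StrictlySpans {X : Type} [MetricSpace X] (A : Set X) : Prop :=
  ∀ x x' : X, ∃ a ∈ A, dist x x' + dist x' a = dist x a

/-- `s` is a geodesic segment joining `x` to `x'`: the image of an isometric embedding
of `[0, d(x,x')]` sending `0` to `x` and `d(x,x')` to `x'`. -/
def IsGeodesicSegment {X : Type} [MetricSpace X] (x x' : X) (s : Set X) : Prop :=
  ∃ γ : ℝ → X, γ 0 = x ∧ γ (dist x x') = x' ∧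
    (∀ t ∈ Set.Icc (0:ℝ) (dist x x'), ∀ t' ∈ Set.Icc (0:ℝ) (dist x x'),
      dist (γ t) (γ t') = |t - t'|) ∧
    s = γ '' Set.Icc (0:ℝ) (dist x x')

/-- A metric tree: a geodesic metric space such that for any triple of points and
any geodesic segments `xy, xz, yz` joining them, `xy ⊆ xz ∪ yz`. -/
def IsMetricTree (X : Type) [MetricSpace X] : Prop :=
  (∀ x x' : X, ∃ s, IsGeodesicSegment x x' s) ∧
  ∀ x y z : X, ∀ sxy sxz syz : Set X,
    IsGeodesicSegment x y sxy → IsGeodesicSegment x z sxz → IsGeodesicSegment y z syz →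
    sxy ⊆ sxz ∪ syz



section Helpers
variable {X : Type} [MetricSpace X]

lemma seg_symm {x y : X} {s : Set X} (h : IsGeodesicSegment x y s) :
    IsGeodesicSegment y x s := by
  obtain ⟨γ, h0, hL, hiso, rfl⟩ := h
  have hd : dist y x = dist x y := dist_comm y x
  refine ⟨fun t => γ (dist x y - t), ?_, ?_, ?_, ?_⟩
  · simpa using hL
  · rw [hd]; simpa using h0
  · intro t ht t' ht'
    rw [hd] at ht ht'
    have h1 : dist x y - t ∈ Set.Icc (0:ℝ) (dist x y) := ⟨by linarith [ht.2], by linarith [ht.1]⟩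
    have h2 : dist x y - t' ∈ Set.Icc (0:ℝ) (dist x y) := ⟨by linarith [ht'.2], by linarith [ht'.1]⟩
    rw [hiso _ h1 _ h2]
    rw [show dist x y - t - (dist x y - t') = t' - t by ring, abs_sub_comm]
  · rw [hd]
    have : (fun t => dist x y - t) '' Set.Icc (0:ℝ) (dist x y) = Set.Icc (0:ℝ) (dist x y) := by
      rw [Set.image_const_sub_Icc]; simp
    rw [← Set.image_image γ (fun t => dist x y - t), this]

lemma seg_left_mem {x y : X} {s : Set X} (h : IsGeodesicSegment x y s) : x ∈ s := by
  obtain ⟨γ, h0, hL, hiso, rfl⟩ := h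
  exact ⟨0, ⟨le_refl 0, dist_nonneg⟩, h0⟩

lemma seg_right_mem {x y : X} {s : Set X} (h : IsGeodesicSegment x y s) : y ∈ s := by
  obtain ⟨γ, h0, hL, hiso, rfl⟩ := h
  exact ⟨dist x y, ⟨dist_nonneg, le_refl _⟩, hL⟩

lemma seg_between {x y z : X} {s : Set X} (h : IsGeodesicSegment x y s) (hz : z ∈ s) :
    dist x z + dist z y = dist x y := by
  obtain ⟨γ, h0, hL, hiso, rfl⟩ := h
  obtain ⟨t, ht, rfl⟩ := hz
  have h1 : dist x (γ t) = t := by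
    rw [← h0, hiso 0 ⟨le_refl 0, dist_nonneg⟩ t ht, zero_sub, abs_neg, abs_of_nonneg ht.1]
  have h2 : dist (γ t) y = dist x y - t := by
    have h3 := hiso t ht (dist x y) ⟨dist_nonneg, le_refl _⟩
    rw [hL] at h3
    rw [h3, abs_of_nonpos (by linarith [ht.2]), neg_sub]
  rw [h1, h2]; ring

lemma seg_isCompact {x y : X} {s : Set X} (h : IsGeodesicSegment x y s) : IsCompact s := by
  obtain ⟨γ, h0, hL, hiso, rfl⟩ := h
  refine isCompact_Icc.image_of_continuousOn ?_
  refine (LipschitzOnWith.of_dist_le_mul (K := 1) (fun t ht t' ht' => ?_)).continuousOn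
  rw [hiso t ht t' ht', Real.dist_eq, NNReal.coe_one, one_mul]

lemma exists_median {x b p : X} {γ : ℝ → X} {sxp spb : Set X}
    (h0 : γ 0 = x) (hb : γ (dist x b) = b)
    (hiso : ∀ t ∈ Set.Icc (0:ℝ) (dist x b), ∀ t' ∈ Set.Icc (0:ℝ) (dist x b),
      dist (γ t) (γ t') = |t - t'|)
    (hxp : IsGeodesicSegment x p sxp) (hpb : IsGeodesicSegment p b spb)
    (hsub : γ '' Set.Icc (0:ℝ) (dist x b) ⊆ sxp ∪ spb) :
    ∃ u ∈ Set.Icc (0:ℝ) (dist x b), γ u ∈ sxp ∧ γ u ∈ spb := by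
  have hcont : ContinuousOn γ (Set.Icc 0 (dist x b)) := by
    refine (LipschitzOnWith.of_dist_le_mul (K := 1) (fun t ht t' ht' => ?_)).continuousOn
    rw [hiso t ht t' ht', Real.dist_eq, NNReal.coe_one, one_mul]
  have hT1 : IsClosed (Set.Icc (0:ℝ) (dist x b) ∩ γ ⁻¹' sxp) :=
    hcont.preimage_isClosed_of_isClosed isClosed_Icc (seg_isCompact hxp).isClosed
  have hT2 : IsClosed (Set.Icc (0:ℝ) (dist x b) ∩ γ ⁻¹' spb) :=
    hcont.preimage_isClosed_of_isClosed isClosed_Icc (seg_isCompact hpb).isClosed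
  have hcover : Set.Icc (0:ℝ) (dist x b) ⊆
      (Set.Icc (0:ℝ) (dist x b) ∩ γ ⁻¹' sxp) ∪ (Set.Icc (0:ℝ) (dist x b) ∩ γ ⁻¹' spb) := by
    intro t ht
    rcases hsub ⟨t, ht, rfl⟩ with h | h
    · exact Or.inl ⟨ht, h⟩
    · exact Or.inr ⟨ht, h⟩
  have hne1 : (Set.Icc (0:ℝ) (dist x b) ∩ (Set.Icc (0:ℝ) (dist x b) ∩ γ ⁻¹' sxp)).Nonempty := by
    refine ⟨0, ⟨le_refl 0, dist_nonneg⟩, ⟨le_refl 0, dist_nonneg⟩, ?_⟩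
    show γ 0 ∈ sxp
    rw [h0]; exact seg_left_mem hxp
  have hne2 : (Set.Icc (0:ℝ) (dist x b) ∩ (Set.Icc (0:ℝ) (dist x b) ∩ γ ⁻¹' spb)).Nonempty := by
    refine ⟨dist x b, ⟨dist_nonneg, le_refl _⟩, ⟨dist_nonneg, le_refl _⟩, ?_⟩
    show γ (dist x b) ∈ spb
    rw [hb]; exact seg_right_mem hpb
  obtain ⟨u, hu⟩ := isPreconnected_closed_iff.mp isPreconnected_Icc _ _ hT1 hT2 hcover hne1 hne2
  exact ⟨u, hu.1, hu.2.1.2, hu.2.2.2⟩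

end Helpers

lemma tree_gromov {X : Type} [MetricSpace X] (hT : IsMetricTree X) (x a b c : X) :
    min (dist x a + dist x b - dist a b) (dist x b + dist x c - dist b c)
      ≤ dist x a + dist x c - dist a c := by
  obtain ⟨sxb, hsxb⟩ := hT.1 x b
  obtain ⟨γ, h0, hbb, hiso, hseq⟩ := hsxb
  obtain ⟨sxa, hxa⟩ := hT.1 x a
  obtain ⟨sab, hab⟩ := hT.1 a b
  obtain ⟨sxc, hxc⟩ := hT.1 x c
  obtain ⟨scb, hcb⟩ := hT.1 c b
  have hsub1 : γ '' Set.Icc (0:ℝ) (dist x b) ⊆ sxa ∪ sab := by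
    rw [← hseq]
    exact hT.2 x b a sxb sxa sab ⟨γ, h0, hbb, hiso, hseq⟩ hxa (seg_symm hab)
  have hsub2 : γ '' Set.Icc (0:ℝ) (dist x b) ⊆ sxc ∪ scb := by
    rw [← hseq]
    exact hT.2 x b c sxb sxc scb ⟨γ, h0, hbb, hiso, hseq⟩ hxc (seg_symm hcb)
  obtain ⟨u₁, hu₁I, hu₁p, hu₁q⟩ := exists_median h0 hbb hiso hxa hab hsub1
  obtain ⟨u₂, hu₂I, hu₂p, hu₂q⟩ := exists_median h0 hbb hiso hxc hcb hsub2
  have e0 : ∀ u, u ∈ Set.Icc (0:ℝ) (dist x b) → dist x (γ u) = u := by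
    intro u huI
    rw [← h0, hiso 0 ⟨le_refl 0, dist_nonneg⟩ u huI, zero_sub, abs_neg, abs_of_nonneg huI.1]
  have e1 : dist x (γ u₁) = u₁ := e0 u₁ hu₁I
  have e1' : dist x (γ u₂) = u₂ := e0 u₂ hu₂I
  have e2 : dist x (γ u₁) + dist (γ u₁) a = dist x a := seg_between hxa hu₁p
  have e3 : dist a (γ u₁) + dist (γ u₁) b = dist a b := seg_between hab hu₁q
  have e4 : dist x (γ u₂) + dist (γ u₂) c = dist x c := seg_between hxc hu₂p
  have e5 : dist c (γ u₂) + dist (γ u₂) b = dist c b := seg_between hcb hu₂q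
  have e6 : ∀ u, u ∈ Set.Icc (0:ℝ) (dist x b) → dist (γ u) b = dist x b - u := by
    intro u huI
    have h3 := hiso u huI (dist x b) ⟨dist_nonneg, le_refl _⟩
    rw [hbb] at h3
    rw [h3, abs_of_nonpos (by linarith [huI.2]), neg_sub]
  have e7 : dist (γ u₁) b = dist x b - u₁ := e6 u₁ hu₁I
  have e8 : dist (γ u₂) b = dist x b - u₂ := e6 u₂ hu₂I
  have e9 : dist (γ u₁) (γ u₂) = |u₁ - u₂| := hiso u₁ hu₁I u₂ hu₂I
  have etri : dist a c ≤ dist a (γ u₁) + dist (γ u₁) (γ u₂) + dist (γ u₂) c :=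
    le_trans (dist_triangle a (γ u₁) c)
      (by linarith [dist_triangle (γ u₁) (γ u₂) c])
  have eca : dist a (γ u₁) = dist (γ u₁) a := dist_comm _ _
  have ecc : dist c (γ u₂) = dist (γ u₂) c := dist_comm _ _
  have hP1 : dist x a + dist x b - dist a b = 2 * u₁ := by linarith
  have hP2 : dist x b + dist x c - dist b c = 2 * u₂ := by
    have : dist b c = dist c b := dist_comm _ _
    linarith
  rcases le_total u₁ u₂ with h | h
  · have habs : |u₁ - u₂| = u₂ - u₁ := by rw [abs_sub_comm, abs_of_nonneg (by linarith)]
    refine le_trans (min_le_left _ _) ?_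
    rw [hP1]; linarith
  · have habs : |u₁ - u₂| = u₁ - u₂ := abs_of_nonneg (by linarith)
    refine le_trans (min_le_right _ _) ?_
    rw [hP2]; linarith

lemma hyperconvex_point {Y : Type} [MetricSpace Y] (hY : IsInjectiveMS Y)
    {ι : Type} [Nonempty ι] (c : ι → Y) (r : ι → ℝ) (hr : ∀ i, 0 ≤ r i)
    (hp : ∀ i j, dist (c i) (c j) ≤ r i + r j) :
    ∃ y : Y, ∀ i, dist y (c i) ≤ r i := by
  classical
  set D : Y → ℝ := fun z => ⨅ i, (r i + dist (c i) z) with hD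
  have hbdd : ∀ z : Y, BddBelow (Set.range fun i => r i + dist (c i) z) := by
    intro z
    exact ⟨0, by rintro _ ⟨i, rfl⟩; exact add_nonneg (hr i) dist_nonneg⟩
  have hD1 : ∀ (z : Y) (i : ι), D z ≤ r i + dist (c i) z := fun z i => ciInf_le (hbdd z) i
  have hD0 : ∀ z : Y, 0 ≤ D z := fun z => le_ciInf (fun i => add_nonneg (hr i) dist_nonneg)
  have hDtri : ∀ z z' : Y, D z ≤ D z' + dist z' z := by
    intro z z'
    have h1 : D z - dist z' z ≤ D z' := by
      refine le_ciInf fun i => ?_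
      have := hD1 z i
      have h2 : dist (c i) z ≤ dist (c i) z' + dist z' z := dist_triangle _ _ _
      linarith
    linarith
  have hDpair : ∀ z z' : Y, dist z z' ≤ D z + D z' := by
    intro z z'
    have h1 : ∀ j, dist z z' - D z ≤ r j + dist (c j) z' := by
      intro j
      have h2 : dist z z' - (r j + dist (c j) z') ≤ D z := by
        refine le_ciInf fun i => ?_
        have h3 : dist z z' ≤ dist z (c i) + dist (c i) (c j) + dist (c j) z' := by
          linarith [dist_triangle z (c i) z', dist_triangle (c i) (c j) z']
        have h4 := hp i j
        have h5 : dist z (c i) = dist (c i) z := dist_comm _ _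
        linarith
      linarith
    have h6 : dist z z' - D z ≤ D z' := le_ciInf fun j => h1 j
    linarith
  by_cases h0 : ∃ z : Y, D z ≤ 0
  · obtain ⟨z, hz⟩ := h0
    refine ⟨z, fun i => ?_⟩
    refine le_of_forall_pos_le_add fun η hη => ?_
    have hlt : D z < η := lt_of_le_of_lt hz hη
    obtain ⟨j, hj⟩ := exists_lt_of_ciInf_lt hlt
    have h2 : dist z (c i) ≤ dist z (c j) + dist (c j) (c i) := dist_triangle _ _ _
    have h3 := hp j i
    have h4 : dist z (c j) = dist (c j) z := dist_comm _ _
    linarith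
  · push_neg at h0
    -- build a metric on Option Y
    set dd : Option Y → Option Y → ℝ := fun o o' =>
      match o, o' with
      | some z, some z' => dist z z'
      | some z, none => D z
      | none, some z' => D z'
      | none, none => 0
      with hdd
    have dd_self : ∀ o : Option Y, dd o o = 0 := by rintro (_ | z) <;> simp [hdd]
    have dd_comm : ∀ o o' : Option Y, dd o o' = dd o' o := by
      rintro (_ | z) (_ | z') <;> simp [hdd, dist_comm]
    have dd_tri : ∀ o o' o'' : Option Y, dd o o'' ≤ dd o o' + dd o' o'' := by
      rintro (_ | z) (_ | z') (_ | z'') <;> simp only [hdd]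
      · simp
      · simp
      · linarith [hD0 z']
      · simpa using hDtri z'' z'
      · simp
      · simpa using hDpair z z''
      · have h1 := hDtri z z'
        have h2 := dist_comm z' z
        linarith
      · exact dist_triangle z z' z''
    letI : MetricSpace (Option Y) :=
      { dist := dd
        dist_self := dd_self
        dist_comm := dd_comm
        dist_triangle := dd_tri
        eq_of_dist_eq_zero := by
          rintro (_ | z) (_ | z') h <;> simp only [hdd] at h
          · rfl
          · exact absurd h (h0 z').ne'
          · exact absurd h (h0 z).ne'
          · rw [dist_eq_zero] at h; rw [h] }
    have hdist_eq : ∀ o o' : Option Y, dist o o' = dd o o' := fun _ _ => rfl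
    set As : Set (Option Y) := Set.range (some : Y → Option Y) with hAs
    set fm : ↥As → Y := fun u => u.1.getD (c (Classical.arbitrary ι)) with hfm
    have hlip : LipschitzWith 1 fm := by
      refine LipschitzWith.of_dist_le_mul fun u v => ?_
      obtain ⟨z, hz⟩ := u.2
      obtain ⟨z', hz'⟩ := v.2
      have h1 : dist u v = dd u.1 v.1 := rfl
      rw [h1, ← hz, ← hz']
      simp only [hfm, ← hz, ← hz', Option.getD_some, hdd]
      simp [NNReal.coe_one]
    obtain ⟨G, hG1, hG2⟩ := hY (Option Y) As fm hlip
    refine ⟨G none, fun i => ?_⟩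
    have hmem : (some (c i) : Option Y) ∈ As := ⟨c i, rfl⟩
    have h1 : G (some (c i)) = c i := by
      have := hG2 ⟨some (c i), hmem⟩
      simpa [hfm] using this
    have h2 : dist (G none) (G (some (c i))) ≤ 1 * dist (none : Option Y) (some (c i)) :=
      hG1.dist_le_mul _ _
    rw [h1, one_mul, hdist_eq] at h2
    refine le_trans h2 ?_
    have h3 := hD1 (c i) i
    simpa [hdd] using h3

lemma keyExt {X Y : Type} [MetricSpace X] [MetricSpace Y] (hY : IsInjectiveMS Y)
    {ε : ℝ} (hε : 0 ≤ ε) (x : X) (A' : Set X) (hne : A'.Nonempty)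
    (hspan : ∀ a : X, ∃ b ∈ A', dist a x + dist x b = dist a b)
    (htrans : ∀ a b c : X,
      min (dist x a + dist x b - dist a b) (dist x b + dist x c - dist b c)
        ≤ dist x a + dist x c - dist a c)
    (g : ↥A' → Y) (hg : ∀ a b : ↥A', |dist (g a) (g b) - dist (a:X) (b:X)| ≤ ε) :
    ∃ y : Y, ∀ a : ↥A', |dist y (g a) - dist x (a:X)| ≤ ε := by
  classical
  haveI : Nonempty ↥A' := hne.to_subtype
  set σ : ↥A' → ℝ := fun a => dist x (a:X) with hσ
  set G : ↥A' → ↥A' → ℝ := fun a b => dist (g a) (g b) - σ a - σ b with hG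
  have hGsymm : ∀ a b, G a b = G b a := by
    intro a b; simp only [hG]; rw [dist_comm]; ring
  have hGle : ∀ a b, G a b ≤ ε := by
    intro a b
    have h1 := (abs_le.mp (hg a b)).2
    have h2 : dist (a:X) (b:X) ≤ σ a + σ b := by
      simp only [hσ]
      calc dist (a:X) (b:X) ≤ dist (a:X) x + dist x (b:X) := dist_triangle _ _ _
        _ = dist x (a:X) + dist x (b:X) := by rw [dist_comm]
    simp only [hG]; linarith
  have hbdd : ∀ a, BddAbove (Set.range fun b => G a b) :=
    fun a => ⟨ε, by rintro _ ⟨b, rfl⟩; exact hGle a b⟩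
  set s : ↥A' → ℝ := fun a => sSup (Set.range fun b => G a b) with hs
  have hle_s : ∀ a b, G a b ≤ s a := fun a b => le_csSup (hbdd a) ⟨b, rfl⟩
  set opp : ↥A' → ↥A' → Prop := fun a b => dist (a:X) x + dist x (b:X) = dist (a:X) (b:X)
    with hopp
  have hopp_G : ∀ a b, opp a b → -ε ≤ G a b := by
    intro a b h
    have h1 := (abs_le.mp (hg a b)).1
    have h2 : dist (a:X) (b:X) = σ a + σ b := by
      simp only [hσ]; rw [← h, dist_comm (a:X) x]
    simp only [hG]; linarith
  have hwit : ∀ a : ↥A', ∃ b : ↥A', opp a b := by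
    intro a
    obtain ⟨b, hb, he⟩ := hspan a
    exact ⟨⟨b, hb⟩, he⟩
  set poor : ↥A' → Prop := fun a => s a ≤ 0 with hpoor
  -- key combinatorial construction
  have htt : ∃ t : ↥A' → ℝ, (∀ a, 0 ≤ t a) ∧ (∀ a, t a ≤ ε) ∧ (∀ a b, G a b ≤ t a + t b) ∧
      (∀ a, ∃ b, t b ≤ G a b + ε) := by
    have hGaa : ∀ a : ↥A', G a a ≤ 0 := by
      intro a
      simp only [hG, dist_self]
      have := dist_nonneg (x := x) (y := (a : X))
      simp only [hσ]
      linarith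
    have hKnonpoor : ∀ (t : ↥A' → ℝ), (∀ b, 0 ≤ t b) → (∀ b, t b ≤ ε) →
        ∀ a : ↥A', ¬ poor a → ∃ b, t b ≤ G a b + ε := by
      intro t ht0 htε a ha
      have h1 : (0:ℝ) < s a := not_le.mp ha
      obtain ⟨v, ⟨b, rfl⟩, hv⟩ := exists_lt_of_lt_csSup (Set.range_nonempty _) h1
      exact ⟨b, by linarith [htε b]⟩
    by_cases hL : ∃ a₀ : ↥A', poor a₀ ∧ ∀ b : ↥A', poor b → ¬ opp a₀ b
    · obtain ⟨a₀, ha₀p, ha₀l⟩ := hL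
      obtain ⟨e, he⟩ := hwit a₀
      refine ⟨fun b => if poor b ∨ b = e then 0 else ε, fun b => ?_, fun b => ?_, ?_, ?_⟩
      · (try dsimp only); split_ifs <;> simp [hε]
      · (try dsimp only); split_ifs <;> simp [hε]
      · intro a b
        try dsimp only
        by_cases pa : poor a ∨ a = e <;> by_cases pb : poor b ∨ b = e
        · rw [if_pos pa, if_pos pb]
          rcases pa with pa | pa
          · linarith [hle_s a b, pa]
          · rcases pb with pb | pb
            · rw [hGsymm]; linarith [hle_s b a, pb]
            · rw [pa, pb]; linarith [hGaa e]
        · rw [if_pos pa, if_neg pb]; linarith [hGle a b]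
        · rw [if_neg pa, if_pos pb]; linarith [hGle a b]
        · rw [if_neg pa, if_neg pb]; linarith [hGle a b]
      · intro a
        by_cases pa : poor a
        · by_cases hex : ∃ b, poor b ∧ opp a b
          · obtain ⟨b, pb, hob⟩ := hex
            refine ⟨b, ?_⟩
            try dsimp only
            rw [if_pos (Or.inl pb)]
            linarith [hopp_G a b hob]
          · push_neg at hex
            have h1 : ¬ opp a₀ a := ha₀l a pa
            have h2 : dist x (a₀:X) + dist x (e:X) - dist (a₀:X) (e:X) = 0 := by
              have := he
              simp only [hopp] at this
              rw [dist_comm (a₀:X) x] at this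
              linarith
            have h3 : 0 ≤ dist x (a₀:X) + dist x (a:X) - dist (a₀:X) (a:X) := by
              have h4 : dist (a₀:X) (a:X) ≤ dist (a₀:X) x + dist x (a:X) := dist_triangle _ _ _
              rw [dist_comm (a₀:X) x] at h4
              linarith
            have h5 : dist x (a₀:X) + dist x (a:X) - dist (a₀:X) (a:X) ≠ 0 := by
              intro h6
              apply h1
              simp only [hopp]
              rw [dist_comm (a₀:X) x]
              linarith
            have h7 : 0 ≤ dist x (a:X) + dist x (e:X) - dist (a:X) (e:X) := by
              have h8 : dist (a:X) (e:X) ≤ dist (a:X) x + dist x (e:X) := dist_triangle _ _ _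
              rw [dist_comm (a:X) x] at h8
              linarith
            have h9 : dist x (a:X) + dist x (e:X) - dist (a:X) (e:X) ≤ 0 := by
              by_contra hco
              push_neg at hco
              have h10 := htrans (a₀:X) (a:X) (e:X)
              have h11 : (0:ℝ) <
                  min (dist x (a₀:X) + dist x (a:X) - dist (a₀:X) (a:X))
                    (dist x (a:X) + dist x (e:X) - dist (a:X) (e:X)) :=
                lt_min (lt_of_le_of_ne h3 (Ne.symm h5)) hco
              linarith
            have hoae : opp a e := by
              simp only [hopp]
              rw [dist_comm (a:X) x]
              linarith
            refine ⟨e, ?_⟩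
            try dsimp only
            rw [if_pos (Or.inr rfl)]
            linarith [hopp_G a e hoae]
        · exact hKnonpoor _ (fun b => by (try dsimp only); split_ifs <;> simp [hε])
            (fun b => by (try dsimp only); split_ifs <;> simp [hε]) a pa
    · push_neg at hL
      refine ⟨fun b => if poor b then 0 else ε, fun b => ?_, fun b => ?_, ?_, ?_⟩
      · (try dsimp only); split_ifs <;> simp [hε]
      · (try dsimp only); split_ifs <;> simp [hε]
      · intro a b
        try dsimp only
        by_cases pa : poor a <;> by_cases pb : poor b
        · rw [if_pos pa, if_pos pb]; linarith [hle_s a b, pa]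
        · rw [if_pos pa, if_neg pb]; linarith [hGle a b]
        · rw [if_neg pa, if_pos pb]; linarith [hGle a b]
        · rw [if_neg pa, if_neg pb]; linarith [hGle a b]
      · intro a
        by_cases pa : poor a
        · obtain ⟨b, pb, hob⟩ := hL a pa
          refine ⟨b, ?_⟩
          try dsimp only
          rw [if_pos pb]
          linarith [hopp_G a b hob]
        · exact hKnonpoor _ (fun b => by (try dsimp only); split_ifs <;> simp [hε])
            (fun b => by (try dsimp only); split_ifs <;> simp [hε]) a pa
  obtain ⟨t, ht0, htε, hK1, hK2⟩ := htt
  obtain ⟨y, hy⟩ := hyperconvex_point hY g (fun a => dist x (a:X) + t a)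
    (fun a => add_nonneg dist_nonneg (ht0 a))
    (fun a b => by have h := hK1 a b; simp only [hG, hσ] at h; linarith)
  refine ⟨y, fun a => ?_⟩
  obtain ⟨b, hb⟩ := hK2 a
  simp only [hG, hσ] at hb
  have hup : dist y (g a) ≤ dist x (a:X) + t a := hy a
  have hup' : dist y (g b) ≤ dist x (b:X) + t b := hy b
  have h1 : dist (g a) (g b) ≤ dist (g a) y + dist y (g b) := dist_triangle _ _ _
  have h4 : dist (g a) y = dist y (g a) := dist_comm _ _
  rw [abs_le]
  constructor
  · linarith
  · linarith [htε a]


/-- An `ε`-roughly isometric map on a strictly spanning subset of a metric tree,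
into an injective metric space, extends `ε`-roughly isometrically to the whole tree. -/
theorem rough_isometry_extension_tree {X Y : Type} [MetricSpace X] [MetricSpace Y]
    (hX : IsMetricTree X) (hY : IsInjectiveMS Y)
    (A : Set X) (hA : StrictlySpans A) (ε : ℝ) (hε : 0 ≤ ε)
    (f : A → Y) (hf : RoughIsom ε f) :
    ∃ fbar : X → Y, RoughIsom ε fbar ∧ ∀ a : A, fbar a = f a := by
  classical
  rcases isEmpty_or_nonempty X with hXe | hXe
  · exact ⟨fun x => (hXe.false x).elim, fun x => (hXe.false x).elim,
      fun a => (hXe.false a.1).elim⟩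
  obtain ⟨x₀⟩ := hXe
  -- the collection of graphs of partial rough-isometric extensions
  set G₀ : Set (X × Y) := {p | ∃ h : p.1 ∈ A, f ⟨p.1, h⟩ = p.2} with hG₀
  set 𝒢 : Set (Set (X × Y)) := {G | G₀ ⊆ G ∧
      (∀ p ∈ G, ∀ q ∈ G, |dist p.2 q.2 - dist p.1 q.1| ≤ ε) ∧
      (∀ p ∈ G, ∀ q ∈ G, p.1 = q.1 → p.2 = q.2)} with h𝒢
  have hG₀mem : G₀ ∈ 𝒢 := by
    refine ⟨le_refl _, ?_, ?_⟩
    · rintro ⟨pa, pb⟩ ⟨hp, hp2⟩ ⟨qa, qb⟩ ⟨hq, hq2⟩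
      simp only at hp2 hq2 ⊢
      rw [← hp2, ← hq2]
      exact hf ⟨pa, hp⟩ ⟨qa, hq⟩
    · rintro ⟨pa, pb⟩ ⟨hp, hp2⟩ ⟨qa, qb⟩ ⟨hq, hq2⟩ h
      simp only at h hp2 hq2 ⊢
      rw [← hp2, ← hq2]
      congr 1
      exact Subtype.ext h
  obtain ⟨M, hG₀M, hMmax⟩ := zorn_subset_nonempty 𝒢 (fun c hc hchain hcne => by
    obtain ⟨c₀, hc₀⟩ := hcne
    refine ⟨⋃₀ c, ⟨?_, ?_, ?_⟩, fun s hs => Set.subset_sUnion_of_mem hs⟩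
    · exact le_trans (hc hc₀).1 (Set.subset_sUnion_of_mem hc₀)
    · rintro p ⟨sp, hsp, hp⟩ q ⟨sq, hsq, hq⟩
      rcases hchain.total hsp hsq with h | h
      · exact (hc hsq).2.1 p (h hp) q hq
      · exact (hc hsp).2.1 p hp q (h hq)
    · rintro p ⟨sp, hsp, hp⟩ q ⟨sq, hsq, hq⟩ hpq
      rcases hchain.total hsp hsq with h | h
      · exact (hc hsq).2.2 p (h hp) q hq hpq
      · exact (hc hsp).2.2 p hp q (h hq) hpq) G₀ hG₀mem
  obtain ⟨hMG₀, hMrough, hMfun⟩ := hMmax.prop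
  set dom : Set X := {z | ∃ y, (z, y) ∈ M} with hdom
  have hAdom : A ⊆ dom := fun a ha => ⟨f ⟨a, ha⟩, hG₀M ⟨ha, rfl⟩⟩
  have hdomne : dom.Nonempty := by
    obtain ⟨a, ha, -⟩ := hA x₀ x₀
    exact ⟨a, hAdom ha⟩
  set gM : ↥dom → Y := fun z => z.2.choose with hgM
  have hgMmem : ∀ z : ↥dom, ((z : X), gM z) ∈ M := fun z => z.2.choose_spec
  have hgMrough : ∀ a b : ↥dom, |dist (gM a) (gM b) - dist (a:X) (b:X)| ≤ ε :=
    fun a b => hMrough _ (hgMmem a) _ (hgMmem b)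
  have htrans := tree_gromov hX
  have hdomuniv : dom = Set.univ := by
    by_contra hne
    obtain ⟨x, hx⟩ : ∃ x : X, x ∉ dom := by
      by_contra h
      push_neg at h
      exact hne (Set.eq_univ_of_forall h)
    have hspan : ∀ a : X, ∃ b ∈ dom, dist a x + dist x b = dist a b := by
      intro a
      obtain ⟨b, hb, he⟩ := hA a x
      exact ⟨b, hAdom hb, he⟩
    obtain ⟨y, hy⟩ := keyExt hY hε x dom hdomne hspan (htrans x) gM hgMrough
    have hM' : insert (x, y) M ∈ 𝒢 := by
      refine ⟨le_trans hMG₀ (Set.subset_insert _ _), ?_, ?_⟩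
      · rintro p (rfl | hp) q (rfl | hq)
        · simpa using hε
        · have hq1 : q.1 ∈ dom := ⟨q.2, by rwa [← @Prod.mk.eta _ _ q] at hq⟩
          have : q.2 = gM ⟨q.1, hq1⟩ := hMfun q (by rwa [← @Prod.mk.eta _ _ q] at hq) _
            (hgMmem ⟨q.1, hq1⟩) rfl
          rw [this]
          exact hy ⟨q.1, hq1⟩
        · have hp1 : p.1 ∈ dom := ⟨p.2, by rwa [← @Prod.mk.eta _ _ p] at hp⟩
          have : p.2 = gM ⟨p.1, hp1⟩ := hMfun p (by rwa [← @Prod.mk.eta _ _ p] at hp) _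
            (hgMmem ⟨p.1, hp1⟩) rfl
          rw [this, dist_comm (gM ⟨p.1, hp1⟩) y, dist_comm p.1 x]
          exact hy ⟨p.1, hp1⟩
        · exact hMrough p hp q hq
      · rintro p (rfl | hp) q (rfl | hq) h
        · rfl
        · exfalso
          apply hx
          simp only at h
          exact ⟨q.2, by rw [h]; rwa [← @Prod.mk.eta _ _ q] at hq⟩
        · exfalso
          apply hx
          simp only at h
          exact ⟨p.2, by rw [← h]; rwa [← @Prod.mk.eta _ _ p] at hp⟩
        · exact hMfun p hp q hq h
    have hMeq := hMmax.eq_of_ge hM' (Set.subset_insert _ _)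
    apply hx
    have hxy : (x, y) ∈ M := by rw [← hMeq]; exact Set.mem_insert _ _
    exact ⟨y, hxy⟩
  have hmemdom : ∀ z : X, z ∈ dom := fun z => hdomuniv ▸ Set.mem_univ z
  refine ⟨fun z => gM ⟨z, hmemdom z⟩, fun z z' => hgMrough ⟨z, hmemdom z⟩ ⟨z', hmemdom z'⟩, ?_⟩
  intro a
  exact hMfun _ (hgMmem ⟨(a : X), hmemdom a⟩) ((a : X), f a) (hG₀M ⟨a.2, rfl⟩) rfl
end

section
/- There exist a metric tree X, a subset A ⊆ X that spans X (but does not strictly span X), an injective metric space Y, and a 1-roughly isometric map f : A → Y that admits no 1-roughly isometric extension f̄ : X → Y. Concretely, one may take X = [0,2], A = {0} ∪ {2 − 2^{−n} : n ≥ 1}, Y the complete simplicial metric tree with one interior vertex y₁ and edges y₀y₁ of length 1/2 and y₁yₙ of length 1/2 − 2^{−n} for n = 2, 3, …, and f sending the n-th point of A to yₙ. -/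
/-!
Geodesic segments in an order-connected subset of `ℝ` are exactly its intervals, so `[0,2]` is a
metric tree. `A` spans `[0,2]` because `0 ∈ A` and `A` accumulates at `2`; it does not strictly
span, because the witness for the pair `(0, 2)` would have to be `2` itself, which is not in `A`.

`Y` is a star tree with one branch for each `a ∈ A`, of length `1/2` for `a = 0` and `a - 3/2`
otherwise, and `f` sends `a` to the tip of its branch. Star trees are hyperconvex, hence injective
by the Zorn's lemma argument of Aronszajn–Panitchpakdi. Every point of `Y` is at distance `< 1`
from `f 0`, because `A` stays below `2`, whereas a `1`-roughly isometric extension `g` would have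
`d(g 2, f 0) ≥ d(2, 0) - 1 = 1`.
-/

open Metric Set
open scoped ENNReal

/-- The subset `A = {0} ∪ {2 − 2^{−n} : n ≥ 1}` of `X = [0,2]`. -/
def exSpanningSet : Set (Set.Icc (0:ℝ) 2) :=
  {x | (x : ℝ) = 0 ∨ ∃ n : ℕ, 1 ≤ n ∧ (x : ℝ) = 2 - (2:ℝ) ^ (-(n : ℤ))}

/-- `Y` is an injective metric space admitting a `1`-roughly isometric map from
`exSpanningSet` with no `1`-roughly isometric extension to all of `[0,2]`. -/
def NoExtensionProp (Y : Type) [MetricSpace Y] : Prop :=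
  IsInjectiveMS Y ∧
  ∃ f : exSpanningSet → Y, RoughIsom 1 f ∧
    ¬ ∃ g : Set.Icc (0:ℝ) 2 → Y, RoughIsom 1 g ∧ ∀ a : exSpanningSet, g a.1 = f a

namespace IsGeodesicSegment

theorem image_isometry {X Y : Type} [MetricSpace X] [MetricSpace Y] {x x' : X} {s : Set X}
    (h : IsGeodesicSegment x x' s) {φ : X → Y} (hφ : Isometry φ) :
    IsGeodesicSegment (φ x) (φ x') (φ '' s) := by
  obtain ⟨γ, h0, h1, hγ, rfl⟩ := h
  rw [IsGeodesicSegment, hφ.dist_eq]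
  exact ⟨φ ∘ γ, congrArg φ h0, congrArg φ h1,
    fun t ht t' ht' => (hφ.dist_eq _ _).trans (hγ t ht t' ht'), (image_comp φ γ _).symm⟩

theorem eq_uIcc {x x' : ℝ} {s : Set ℝ} (h : IsGeodesicSegment x x' s) : s = uIcc x x' := by
  obtain ⟨γ, h0, h1, hγ, rfl⟩ := h
  have hd : 0 ≤ dist x x' := dist_nonneg
  apply Subset.antisymm
  · rintro _ ⟨t, ht, rfl⟩
    have hx : dist x (γ t) = t := by
      rw [← h0, hγ 0 ⟨le_rfl, hd⟩ t ht, zero_sub, abs_neg, abs_of_nonneg ht.1]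
    have hx' : dist (γ t) x' = dist x x' - t := by
      conv_lhs => rw [← h1]
      rw [hγ t ht _ ⟨hd, le_rfl⟩, abs_sub_comm, abs_of_nonneg (sub_nonneg.2 ht.2)]
    rw [← segment_eq_uIcc, mem_segment_iff_wbtw, ← dist_add_dist_eq_iff, hx, hx']
    ring
  · have hcont : ContinuousOn γ (Icc 0 (dist x x')) :=
      (LipschitzOnWith.of_dist_le_mul fun t ht t' ht' => by
        rw [hγ t ht t' ht', NNReal.coe_one, one_mul, Real.dist_eq]).continuousOn
    exact (isPreconnected_iff_ordConnected.1 (isPreconnected_Icc.image γ hcont)).uIcc_subset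
      ⟨0, ⟨le_rfl, hd⟩, h0⟩ ⟨dist x x', ⟨hd, le_rfl⟩, h1⟩

theorem mem_iff_mem_uIcc {S : Set ℝ} {x x' : S} {s : Set S} (h : IsGeodesicSegment x x' s)
    {w : S} : w ∈ s ↔ (w : ℝ) ∈ uIcc (x : ℝ) x' := by
  rw [← (h.image_isometry isometry_subtype_coe).eq_uIcc, Subtype.coe_injective.mem_set_image]

end IsGeodesicSegment

theorem exists_isGeodesicSegment_of_ordConnected {S : Set ℝ} (hS : S.OrdConnected) (x x' : S) :
    ∃ s, IsGeodesicSegment x x' s := by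
  have hd : 0 ≤ dist x x' := dist_nonneg
  have hd' : dist x x' = |(x : ℝ) - x'| := by rw [Subtype.dist_eq, Real.dist_eq]
  let γ₀ : ℝ → ℝ := fun t => if (x : ℝ) ≤ x' then x + t else x - t
  have hγ₀ : ∀ t ∈ Icc 0 (dist x x'), γ₀ t ∈ uIcc (x : ℝ) x' := by
    intro t ⟨ht₀, ht⟩
    rw [hd'] at ht
    simp only [γ₀, mem_uIcc]
    split_ifs with h
    · rw [abs_of_nonpos (by linarith)] at ht; left; constructor <;> linarith
    · rw [abs_of_pos (by linarith)] at ht; right; constructor <;> linarith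
  let γ : ℝ → S := IccExtend hd fun t => ⟨γ₀ t, hS.uIcc_subset x.2 x'.2 (hγ₀ t t.2)⟩
  have hγ : ∀ t ∈ Icc 0 (dist x x'), (γ t : ℝ) = γ₀ t := fun t ht => by
    simp only [γ, IccExtend_of_mem _ _ ht]
  refine ⟨_, γ, ?_, ?_, fun t ht t' ht' => ?_, rfl⟩
  · ext
    rw [hγ 0 ⟨le_rfl, hd⟩]
    simp [γ₀]
  · ext
    rw [hγ _ ⟨hd, le_rfl⟩, hd']
    simp only [γ₀]
    split_ifs with h
    · rw [abs_of_nonpos (by linarith)]; ring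
    · rw [abs_of_pos (by linarith)]; ring
  · rw [Subtype.dist_eq, hγ t ht, hγ t' ht', Real.dist_eq]
    simp only [γ₀]
    split_ifs
    · ring_nf
    · rw [← abs_neg]; ring_nf

theorem isMetricTree_of_ordConnected {S : Set ℝ} (hS : S.OrdConnected) : IsMetricTree S :=
  ⟨exists_isGeodesicSegment_of_ordConnected hS, fun _ y z _ _ _ hxy hxz hyz _ hw => by
    rw [mem_union, hxy.mem_iff_mem_uIcc, hxz.mem_iff_mem_uIcc, hyz.mem_iff_mem_uIcc,
      uIcc_comm (y : ℝ)] at *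
    exact uIcc_subset_uIcc_union_uIcc hw⟩

theorem spans_of_forall_exists_le_of_forall_exists_ge {S : Set ℝ} {A : Set S}
    (hle : ∀ s : S, ∀ ε > 0, ∃ a ∈ A, (a : ℝ) ≤ s + ε)
    (hge : ∀ s : S, ∀ ε > 0, ∃ a ∈ A, (s : ℝ) ≤ a + ε) : Spans A := by
  intro x x'
  refine ⟨?_, fun b hb => le_of_forall_pos_le_add fun ε hε => ?_⟩
  · rintro _ ⟨a, -, rfl⟩
    linarith [dist_triangle x x' a]
  have hb' : ∀ a ∈ A, |(x : ℝ) - a| - |(x' : ℝ) - a| ≤ b := fun a ha => by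
    simpa only [Subtype.dist_eq, Real.dist_eq] using hb ⟨a, ha, rfl⟩
  rw [Subtype.dist_eq, Real.dist_eq]
  -- a point of `A` just beyond `x'`, seen from `x`, nearly realises `d(x, x')`
  rcases le_total (x' : ℝ) x with h | h
  · obtain ⟨a, ha, hax'⟩ := hle x' (ε / 2) (half_pos hε)
    have h' : |(x' : ℝ) - a| ≤ x' - a + ε := abs_le.2 ⟨by linarith, by linarith⟩
    linarith [hb' a ha, le_abs_self ((x : ℝ) - a), abs_of_nonneg (sub_nonneg.2 h)]
  · obtain ⟨a, ha, hax'⟩ := hge x' (ε / 2) (half_pos hε)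
    have h' : |(x' : ℝ) - a| ≤ a - x' + ε := abs_le.2 ⟨by linarith, by linarith⟩
    linarith [hb' a ha, neg_le_abs ((x : ℝ) - a), abs_of_nonpos (sub_nonpos.2 h)]

theorem StrictlySpans.mem_of_forall_le {S : Set ℝ} {A : Set S} (hA : StrictlySpans A)
    {x y : S} (hxy : (x : ℝ) < y) (hy : ∀ s : S, (s : ℝ) ≤ y) : y ∈ A := by
  obtain ⟨a, ha, hxya⟩ := hA x y
  simp only [Subtype.dist_eq, Real.dist_eq] at hxya
  have hay : (a : ℝ) = y := by
    rw [abs_of_neg (sub_neg.2 hxy), abs_of_nonneg (sub_nonneg.2 (hy a))] at hxya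
    rcases abs_cases ((x : ℝ) - a) with ⟨h, -⟩ | ⟨h, -⟩ <;> linarith
  exact Subtype.ext hay ▸ ha

def IsHyperconvex (Y : Type) [MetricSpace Y] : Prop :=
  ∀ (ι : Type) (c : ι → Y) (r : ι → ℝ), (∀ i j, dist (c i) (c j) ≤ r i + r j) →
    ∃ y, ∀ i, dist y (c i) ≤ r i

section Extension

variable {B Y : Type} [MetricSpace B] [MetricSpace Y]

/-- Graph of a `1`-Lipschitz partial map `B → Y` (the inequality forces `G` to be functional). -/
def IsNonexpandingRel (G : Set (B × Y)) : Prop :=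
  ∀ p ∈ G, ∀ q ∈ G, dist p.2 q.2 ≤ dist p.1 q.1

theorem exists_maximal_isNonexpandingRel {G₀ : Set (B × Y)} (h₀ : IsNonexpandingRel G₀) :
    ∃ M, G₀ ⊆ M ∧ Maximal IsNonexpandingRel M :=
  zorn_subset_nonempty {G | IsNonexpandingRel G} (fun c hc hchain _ => ⟨⋃₀ c, by
    rintro p ⟨G, hG, hp⟩ q ⟨G', hG', hq⟩
    rcases hchain.total hG hG' with h | h
    · exact hc hG' p (h hp) q hq
    · exact hc hG p hp q (h hq), fun _ => subset_sUnion_of_mem⟩) G₀ h₀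

theorem IsNonexpandingRel.exists_insert (hY : IsHyperconvex Y) {M : Set (B × Y)}
    (hM : IsNonexpandingRel M) (b : B) : ∃ y, IsNonexpandingRel (insert (b, y) M) := by
  obtain ⟨y, hy⟩ := hY M (fun p => p.1.2) (fun p => dist b p.1.1) fun p q =>
    (hM p.1 p.2 q.1 q.2).trans (dist_triangle_left _ _ b)
  refine ⟨y, ?_⟩
  simp only [IsNonexpandingRel, forall_mem_insert, dist_self, le_refl, true_and]
  exact ⟨fun q hq => hy ⟨q, hq⟩, fun p hp =>
    ⟨by simpa only [dist_comm] using hy ⟨p, hp⟩, hM p hp⟩⟩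

theorem IsHyperconvex.isInjectiveMS (hY : IsHyperconvex Y) : IsInjectiveMS Y := by
  intro B _ A f hf
  obtain ⟨M, hfM, hM⟩ := exists_maximal_isNonexpandingRel (G₀ := range fun a : A => ((a : B), f a))
    (by
      rintro _ ⟨a, rfl⟩ _ ⟨a', rfl⟩
      simpa only [NNReal.coe_one, one_mul, Subtype.dist_eq] using hf.dist_le_mul a a')
  have htotal : ∀ b, ∃ y, (b, y) ∈ M := fun b => by
    obtain ⟨y, hy⟩ := hM.1.exists_insert hY b
    exact ⟨y, hM.2 hy (subset_insert _ _) (mem_insert _ _)⟩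
  choose g hg using htotal
  refine ⟨g, LipschitzWith.of_dist_le_mul fun b b' => ?_, fun a => ?_⟩
  · simpa only [NNReal.coe_one, one_mul] using hM.1 _ (hg b) _ (hg b')
  · simpa using hM.1 _ (hg a) _ (hfM ⟨a, rfl⟩)

end Extension

/-- The star-shaped metric tree with a segment of length `L k` for each `k : K`, all glued at one
endpoint (the hub), which is encoded with `branch = k₀`. -/
@[ext]
structure StarTree {K : Type} (k₀ : K) (L : K → ℝ) where
  branch : K
  height : ℝ
  height_nonneg : 0 ≤ height
  height_le : height ≤ L branch
  branch_eq_of_height_eq_zero : height = 0 → branch = k₀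

namespace StarTree

variable {K : Type} [DecidableEq K] {k₀ : K} {L : K → ℝ}

instance : MetricSpace (StarTree k₀ L) where
  dist p q := if p.branch = q.branch then |p.height - q.height| else p.height + q.height
  dist_self p := by simp
  dist_comm p q := by
    by_cases h : p.branch = q.branch
    · simp [h, abs_sub_comm]
    · simp [h, Ne.symm h, add_comm]
  dist_triangle p q r := by
    have := p.height_nonneg; have := q.height_nonneg; have := r.height_nonneg
    split_ifs <;> grind
  eq_of_dist_eq_zero {p q} h := by
    split_ifs at h with hk
    · exact StarTree.ext hk (sub_eq_zero.1 (abs_eq_zero.1 h))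
    · have := p.height_nonneg; have := q.height_nonneg
      exact absurd ((p.branch_eq_of_height_eq_zero (by linarith)).trans
        (q.branch_eq_of_height_eq_zero (by linarith)).symm) hk

theorem dist_eq (p q : StarTree k₀ L) :
    dist p q = if p.branch = q.branch then |p.height - q.height| else p.height + q.height :=
  rfl

theorem exists_forall_dist_le_of_lt {ι : Type} {c : ι → StarTree k₀ L} {r : ι → ℝ}
    (hr : ∀ i j, dist (c i) (c j) ≤ r i + r j) {i₀ : ι} (hi₀ : r i₀ < (c i₀).height) :
    ∃ y, ∀ i, dist y (c i) ≤ r i := by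
  set k := (c i₀).branch
  have hr₀ : ∀ i, 0 ≤ r i := fun i => by linarith [dist_self (c i) ▸ hr i i]
  have hL : ∀ i : {i // (c i).branch = k}, (c i).height ≤ L k := fun i =>
    (c i).height_le.trans_eq (congrArg L i.2)
  have : Nonempty {i // (c i).branch = k} := ⟨⟨i₀, rfl⟩⟩
  -- the centre lies on branch `k`, as far out as the balls centred on that branch require
  let σ := ⨆ i : {i // (c i).branch = k}, (c i).height - r i
  have hbdd : BddAbove (range fun i : {i // (c i).branch = k} => (c i).height - r i) :=
    ⟨L k, by rintro _ ⟨i, rfl⟩; linarith [hL i, hr₀ i]⟩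
  have hσ₀ : (c i₀).height - r i₀ ≤ σ := le_ciSup hbdd ⟨i₀, rfl⟩
  have hσL : σ ≤ L k := ciSup_le fun i => by linarith [hL i, hr₀ i]
  refine ⟨⟨k, σ, by linarith, hσL, fun h => by linarith⟩, fun j => ?_⟩
  rw [dist_eq]
  by_cases hj : (c j).branch = k
  · rw [if_pos hj.symm]
    have hσ : σ ≤ (c j).height + r j := ciSup_le fun i => by
      have := hr i j
      rw [dist_eq, if_pos (i.2.trans hj.symm)] at this
      linarith [le_abs_self ((c i).height - (c j).height)]
    have := le_ciSup hbdd ⟨j, hj⟩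
    exact abs_le.2 ⟨by linarith, by linarith⟩
  · rw [if_neg (Ne.symm hj)]
    have hσ : σ ≤ r j - (c j).height := ciSup_le fun i => by
      have := hr i j
      rw [dist_eq, if_neg fun h => hj (h.symm.trans i.2)] at this
      linarith
    linarith

theorem isHyperconvex (h₀ : 0 ≤ L k₀) : IsHyperconvex (StarTree k₀ L) := by
  intro ι c r hr
  by_cases hdeep : ∃ i, r i < (c i).height
  · obtain ⟨i₀, hi₀⟩ := hdeep
    exact exists_forall_dist_le_of_lt hr hi₀
  · push Not at hdeep
    refine ⟨⟨k₀, 0, le_rfl, h₀, fun _ => rfl⟩, fun i => ?_⟩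
    rw [dist_eq]
    split_ifs <;> simpa [abs_of_nonneg (c i).height_nonneg] using hdeep i

end StarTree

noncomputable section

theorem two_zpow_neg_natCast (n : ℕ) : (2 : ℝ) ^ (-(n : ℤ)) = (1 / 2) ^ n := by
  rw [zpow_neg, zpow_natCast, one_div_pow, one_div]

theorem two_zpow_neg_mem_Ioc {n : ℕ} (hn : 1 ≤ n) : (2 : ℝ) ^ (-(n : ℤ)) ∈ Ioc 0 (1 / 2) := by
  rw [two_zpow_neg_natCast]
  exact ⟨by positivity, pow_le_of_le_one (by norm_num) (by norm_num) (by omega)⟩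

theorem eq_zero_or_mem_Ico_of_mem_exSpanningSet {a : Icc (0 : ℝ) 2} (ha : a ∈ exSpanningSet) :
    (a : ℝ) = 0 ∨ (a : ℝ) ∈ Ico (3 / 2) 2 := by
  rcases ha with ha | ⟨n, hn, ha⟩
  · exact Or.inl ha
  · have := two_zpow_neg_mem_Ioc hn
    exact Or.inr ⟨by linarith [this.2], by linarith [this.1]⟩

theorem exists_mem_exSpanningSet_gt {ε : ℝ} (hε : 0 < ε) :
    ∃ a ∈ exSpanningSet, 2 - ε < (a : ℝ) := by
  have hsmall := (tendsto_pow_atTop_nhds_zero_of_lt_one (by norm_num)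
    (by norm_num : (1 / 2 : ℝ) < 1)).eventually (gt_mem_nhds hε)
  obtain ⟨n, hn, hnε⟩ := ((Filter.eventually_ge_atTop 1).and hsmall).exists
  rw [← two_zpow_neg_natCast] at hnε
  have := two_zpow_neg_mem_Ioc hn
  exact ⟨⟨2 - 2 ^ (-(n : ℤ)), by linarith [this.2], by linarith [this.1]⟩, Or.inr ⟨n, hn, rfl⟩,
    show 2 - ε < 2 - (2 : ℝ) ^ (-(n : ℤ)) by linarith⟩

def exZero : exSpanningSet :=
  ⟨⟨0, le_rfl, by norm_num⟩, Or.inl rfl⟩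

theorem spans_exSpanningSet : Spans exSpanningSet :=
  spans_of_forall_exists_le_of_forall_exists_ge
    (fun s ε hε => ⟨exZero.1, exZero.2, show (0 : ℝ) ≤ s + ε by linarith [s.2.1]⟩)
    (fun s ε hε => by
      obtain ⟨a, ha, haε⟩ := exists_mem_exSpanningSet_gt hε
      exact ⟨a, ha, by linarith [s.2.2]⟩)

theorem not_strictlySpans_exSpanningSet : ¬ StrictlySpans exSpanningSet := fun h => by
  have := h.mem_of_forall_le (x := exZero.1) (y := ⟨2, by norm_num, le_rfl⟩)
    (by norm_num [exZero]) fun s => s.2.2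
  rcases eq_zero_or_mem_Ico_of_mem_exSpanningSet this with h2 | h2 <;> norm_num at h2

/-- The point `3/2 = 2 - 2⁻¹` of `A`; its branch has length `0`, so its tip is the hub. -/
def exHubBranch : exSpanningSet :=
  ⟨⟨3 / 2, by norm_num, by norm_num⟩, Or.inr ⟨1, le_rfl, by norm_num⟩⟩

/-- Branch lengths of the paper's tree `Y`, with branches labelled by `A`: `a = 2 - 2^{-n}` labels
the branch `y₁yₙ`, of length `a - 3/2 = 1/2 - 2^{-n}`, and `0` labels `y₁y₀`. -/
def exBranchLength (a : exSpanningSet) : ℝ :=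
  if (a.1 : ℝ) = 0 then 1 / 2 else a.1 - 3 / 2

abbrev exTree : Type := StarTree exHubBranch exBranchLength

theorem exBranchLength_nonneg (a : exSpanningSet) : 0 ≤ exBranchLength a := by
  unfold exBranchLength
  rcases eq_zero_or_mem_Ico_of_mem_exSpanningSet a.2 with ha | ha
  · simp [ha]
  · rw [if_neg (by linarith [ha.1])]
    linarith [ha.1]

theorem eq_exHubBranch_of_exBranchLength_eq_zero {a : exSpanningSet}
    (h : exBranchLength a = 0) : a = exHubBranch := by
  unfold exBranchLength at h
  split_ifs at h
  · norm_num at h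
  · exact Subtype.ext (Subtype.ext (show (a.1 : ℝ) = 3 / 2 by linarith))

def exTip (a : exSpanningSet) : exTree :=
  ⟨a, exBranchLength a, exBranchLength_nonneg a, le_rfl,
    eq_exHubBranch_of_exBranchLength_eq_zero⟩

theorem roughIsom_exTip : RoughIsom 1 exTip := by
  intro a a'
  rw [StarTree.dist_eq]
  split_ifs with h
  · simp [show a = a' from h]
  · simp only [exTip, exBranchLength, Subtype.dist_eq, Real.dist_eq]
    rcases eq_zero_or_mem_Ico_of_mem_exSpanningSet a.2 with ha | ha <;>
      rcases eq_zero_or_mem_Ico_of_mem_exSpanningSet a'.2 with ha' | ha' <;>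
      grind

theorem exBranchLength_exZero : exBranchLength exZero = 1 / 2 :=
  if_pos rfl

theorem dist_exTip_exZero_lt_one (y : exTree) : dist y (exTip exZero) < 1 := by
  have h₀ := y.height_nonneg
  have hL := y.height_le
  rw [StarTree.dist_eq]
  show (if y.branch = exZero then |y.height - exBranchLength exZero|
    else y.height + exBranchLength exZero) < 1
  rw [exBranchLength_exZero]
  rcases eq_zero_or_mem_Ico_of_mem_exSpanningSet y.branch.2 with hy | ⟨hy₁, hy₂⟩
  · rw [exBranchLength, if_pos hy] at hL
    rw [if_pos (Subtype.ext (Subtype.ext hy))]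
    exact abs_lt.2 ⟨by linarith, by linarith⟩
  · rw [exBranchLength, if_neg (by linarith)] at hL
    rw [if_neg fun h => by rw [h] at hy₁; norm_num [exZero] at hy₁]
    linarith

end

/-- Example: `X = [0,2]` is a metric tree, `A = {0} ∪ {2 − 2^{−n} : n ≥ 1}` spans `X`
but does not strictly span it, and there are an injective metric space `Y` and a
`1`-roughly isometric map `f : A → Y` with no `1`-roughly isometric extension to `X`. -/
theorem no_rough_isometric_extension_example :
    IsMetricTree (Set.Icc (0:ℝ) 2) ∧ Spans exSpanningSet ∧ ¬ StrictlySpans exSpanningSet ∧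
    ∃ (Y : Type) (mY : MetricSpace Y), @NoExtensionProp Y mY := by
  refine ⟨isMetricTree_of_ordConnected ordConnected_Icc, spans_exSpanningSet,
    not_strictlySpans_exSpanningSet, exTree, inferInstance,
    (StarTree.isHyperconvex (exBranchLength_nonneg _)).isInjectiveMS, exTip, roughIsom_exTip, ?_⟩
  rintro ⟨g, hg, hgf⟩
  have h := hg ⟨2, by norm_num, le_rfl⟩ exZero.1
  rw [hgf exZero, Subtype.dist_eq, Real.dist_eq, show (exZero.1 : ℝ) = 0 from rfl, sub_zero,
    abs_two] at h
  linarith [(abs_le.1 h).1, dist_exTip_exZero_lt_one (g ⟨2, by norm_num, le_rfl⟩)]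
end

section
/- Let X be a metric tree and suppose A ⊆ X is a set that spans X. Then there exists a dense subset Σ ⊆ X which is a geodesic subspace of X (hence itself a metric tree) such that A ⊆ Σ and A strictly spans Σ. -/
open Metric Set
open scoped ENNReal

namespace IGS
variable {X : Type} [MetricSpace X]

lemma mem_left {x x' : X} {s : Set X} (h : IsGeodesicSegment x x' s) : x ∈ s := by
  obtain ⟨γ, h0, hD, hiso, rfl⟩ := h
  exact ⟨0, ⟨le_refl 0, dist_nonneg⟩, h0⟩

lemma dist_of_mem {x x' y : X} {s : Set X} (h : IsGeodesicSegment x x' s) (hy : y ∈ s) :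
    dist x y + dist y x' = dist x x' := by
  obtain ⟨γ, h0, hD, hiso, rfl⟩ := h
  obtain ⟨t, ht, rfl⟩ := hy
  have h0m : (0:ℝ) ∈ Icc (0:ℝ) (dist x x') := ⟨le_refl 0, dist_nonneg⟩
  have hDm : dist x x' ∈ Icc (0:ℝ) (dist x x') := ⟨dist_nonneg, le_refl _⟩
  have h1 : dist x (γ t) = t := by
    rw [← h0, hiso 0 h0m t ht, abs_sub_comm, sub_zero, abs_of_nonneg ht.1]
  have h2 : dist (γ t) x' = dist x x' - t := by
    have h3 := hiso t ht _ hDm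
    rw [hD] at h3
    rw [h3, abs_of_nonpos (by linarith [ht.2])]; ring
  linarith

lemma sub_left {x x' y : X} {s : Set X} (h : IsGeodesicSegment x x' s) (hy : y ∈ s) :
    ∃ s', IsGeodesicSegment x y s' ∧ s' ⊆ s := by
  obtain ⟨γ, h0, hD, hiso, rfl⟩ := h
  obtain ⟨t, ht, rfl⟩ := hy
  have hdxy : dist x (γ t) = t := by
    rw [← h0, hiso 0 ⟨le_refl _, dist_nonneg⟩ t ht, abs_sub_comm, sub_zero, abs_of_nonneg ht.1]
  refine ⟨γ '' Icc 0 t, ⟨γ, h0, by rw [hdxy], ?_, by rw [hdxy]⟩,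
    image_mono (Icc_subset_Icc_right ht.2)⟩
  intro u hu u' hu'
  rw [hdxy] at hu hu'
  exact hiso u ⟨hu.1, hu.2.trans ht.2⟩ u' ⟨hu'.1, hu'.2.trans ht.2⟩

lemma symm {x x' : X} {s : Set X} (h : IsGeodesicSegment x x' s) :
    IsGeodesicSegment x' x s := by
  obtain ⟨γ, h0, hD, hiso, rfl⟩ := h
  have hd : dist x' x = dist x x' := dist_comm x' x
  refine ⟨fun t => γ (dist x x' - t), by show γ _ = x'; rw [sub_zero, hD],
    by show γ _ = x; rw [hd, sub_self, h0], ?_, ?_⟩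
  · intro t ht t' ht'
    rw [hd] at ht ht'
    rw [hiso (dist x x' - t) ⟨by linarith [ht.2], by linarith [ht.1]⟩
      (dist x x' - t') ⟨by linarith [ht'.2], by linarith [ht'.1]⟩]
    have he : (dist x x' - t) - (dist x x' - t') = t' - t := by ring
    rw [he, abs_sub_comm]
  · rw [hd, show (fun t => γ (dist x x' - t)) = γ ∘ (fun t => dist x x' - t) from rfl,
      image_comp, Set.image_const_sub_Icc, sub_self, sub_zero]

lemma lift {Sig : Set X} {x x' : Sig} {s : Set X}
    (h : IsGeodesicSegment (x : X) (x' : X) s) (hsub : s ⊆ Sig) :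
    ∃ s' : Set Sig, IsGeodesicSegment x x' s' ∧ Subtype.val '' s' = s := by
  obtain ⟨γ, h0, hD, hiso, rfl⟩ := h
  have hD0 : (0:ℝ) ≤ dist (x:X) (x':X) := dist_nonneg
  have hmem : ∀ t : ℝ, γ (max 0 (min t (dist (x:X) (x':X)))) ∈ Sig := fun t =>
    hsub ⟨max 0 (min t _), ⟨le_max_left _ _, max_le hD0 (min_le_right _ _)⟩, rfl⟩
  set γ' : ℝ → Sig := fun t => ⟨γ (max 0 (min t (dist (x:X) (x':X)))), hmem t⟩ with hγ'
  have hdistS : dist x x' = dist (x:X) (x':X) := Subtype.dist_eq x x'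
  have hproj : ∀ t ∈ Icc (0:ℝ) (dist (x:X) (x':X)), max 0 (min t (dist (x:X) (x':X))) = t :=
    fun t ht => by rw [min_eq_left ht.2, max_eq_right ht.1]
  refine ⟨γ' '' Icc 0 (dist x x'), ⟨γ', ?_, ?_, ?_, rfl⟩, ?_⟩
  · apply Subtype.ext
    show γ _ = (x:X)
    rw [hproj 0 ⟨le_refl _, hD0⟩, h0]
  · apply Subtype.ext
    show γ _ = (x':X)
    rw [hdistS, hproj _ ⟨hD0, le_refl _⟩, hD]
  · intro t ht t' ht'
    rw [hdistS] at ht ht'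
    rw [Subtype.dist_eq]
    show dist (γ _) (γ _) = _
    rw [hproj t ht, hproj t' ht']
    exact hiso t ht t' ht'
  · rw [hdistS, ← image_comp]
    apply image_congr
    intro t ht
    show γ _ = γ t
    rw [hproj t ht]

lemma proj {Sig : Set X} {x x' : Sig} {s : Set Sig}
    (h : IsGeodesicSegment x x' s) :
    IsGeodesicSegment (x : X) (x' : X) (Subtype.val '' s) := by
  obtain ⟨γ, h0, hD, hiso, rfl⟩ := h
  have hd : dist (x:X) (x':X) = dist x x' := (Subtype.dist_eq x x').symm
  refine ⟨fun t => (γ t : X), by show ((γ 0 : Sig) : X) = (x : X); rw [h0],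
    by show ((γ _ : Sig) : X) = (x' : X); rw [hd, hD], ?_, ?_⟩
  · intro t ht t' ht'
    rw [hd] at ht ht'
    rw [← Subtype.dist_eq]
    exact hiso t ht t' ht'
  · rw [hd]
    exact (Set.image_comp Subtype.val γ _).symm

end IGS


/-- Lemma 2.4: if `A` spans a metric tree `X`, then there is a dense geodesic subspace
`Σ ⊆ X` (hence itself a metric tree) containing `A`, which `A` strictly spans. -/
theorem dense_subtree_strictly_spanned {X : Type} [MetricSpace X]
    (hX : IsMetricTree X) (A : Set X) (hA : Spans A) :
    ∃ Sig : Set X, Dense Sig ∧ A ⊆ Sig ∧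
      (∀ x ∈ Sig, ∀ x' ∈ Sig, ∃ s, IsGeodesicSegment x x' s ∧ s ⊆ Sig) ∧
      IsMetricTree Sig ∧
      StrictlySpans {z : Sig | (z : X) ∈ A} := by
  obtain ⟨hgeo, htree⟩ := hX
  choose seg hseg using hgeo
  by_cases hE : IsEmpty X
  · refine ⟨∅, fun x => (hE.false x).elim, fun a ha => (hE.false a).elim,
      fun x hx => (hE.false x).elim,
      ⟨fun x => (hE.false x.1).elim, fun x => (hE.false x.1).elim⟩,
      fun x => (hE.false x.1).elim⟩
  rw [not_isEmpty_iff] at hE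
  obtain ⟨x₀⟩ := hE
  rcases A.eq_empty_or_nonempty with rfl | ⟨a₀, ha₀⟩
  · exfalso
    have h := hA x₀ x₀
    simp only [Set.image_empty] at h
    have h1 : (dist x₀ x₀ : ℝ) ≤ dist x₀ x₀ - 1 :=
      h.2 (fun b hb => absurd hb (Set.notMem_empty b))
    linarith
  set Sig : Set X := ⋃ a ∈ A, ⋃ b ∈ A, seg a b with hSig
  have hmemSig : ∀ a ∈ A, ∀ b ∈ A, seg a b ⊆ Sig := by
    intro a ha b hb y hy
    simp only [hSig, mem_iUnion]
    exact ⟨a, ha, b, hb, hy⟩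
  have hSigmem : ∀ y ∈ Sig, ∃ a ∈ A, ∃ b ∈ A, y ∈ seg a b := by
    intro y hy
    simp only [hSig, mem_iUnion] at hy
    obtain ⟨a, ha, b, hb, h⟩ := hy
    exact ⟨a, ha, b, hb, h⟩
  have hA_Sig : A ⊆ Sig := fun a ha => hmemSig a ha a ha (IGS.mem_left (hseg a a))
  have hsub1 : ∀ c ∈ A, ∀ x ∈ Sig, seg c x ⊆ Sig := by
    intro c hc x hx
    obtain ⟨a, ha, b, hb, hxab⟩ := hSigmem x hx
    obtain ⟨s1, hs1, hs1sub⟩ := IGS.sub_left (hseg a b) hxab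
    intro y hy
    rcases htree c x a (seg c x) (seg c a) s1 (hseg c x) (hseg c a) (IGS.symm hs1) hy with h | h
    · exact hmemSig c hc a ha h
    · exact hmemSig a ha b hb (hs1sub h)
  have hsegSig : ∀ x ∈ Sig, ∀ x' ∈ Sig, seg x x' ⊆ Sig := by
    intro x hx x' hx'
    obtain ⟨c, hc, d, hd, hx'cd⟩ := hSigmem x' hx'
    obtain ⟨s2, hs2, hs2sub⟩ := IGS.sub_left (hseg c d) hx'cd
    intro y hy
    rcases htree x x' c (seg x x') (seg c x) s2 (hseg x x') (IGS.symm (hseg c x))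
      (IGS.symm hs2) hy with h | h
    · exact hsub1 c hc x hx h
    · exact hmemSig c hc d hd (hs2sub h)
  have hgeosub : ∀ x ∈ Sig, ∀ x' ∈ Sig, ∃ s, IsGeodesicSegment x x' s ∧ s ⊆ Sig :=
    fun x hx x' hx' => ⟨seg x x', hseg x x', hsegSig x hx x' hx'⟩
  have hdense : Dense Sig := by
    intro x
    rw [Metric.mem_closure_iff]
    intro ε hε
    have h := hA a₀ x
    have hlt : dist a₀ x - ε/2 < dist a₀ x := by linarith
    obtain ⟨v, hv, hbv, _⟩ := h.exists_between hlt
    obtain ⟨b, hb, rfl⟩ := hv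
    by_cases hc : dist a₀ b ≤ dist a₀ x
    · refine ⟨b, hA_Sig hb, ?_⟩
      have htr := dist_triangle a₀ x b
      have hxb : dist x b = dist b x := dist_comm x b
      linarith
    · push_neg at hc
      obtain ⟨γ, h0, hD, hiso, hs⟩ := hseg a₀ b
      have ht₀ : dist a₀ x ∈ Icc (0:ℝ) (dist a₀ b) := ⟨dist_nonneg, le_of_lt hc⟩
      have hy : γ (dist a₀ x) ∈ seg a₀ b := by
        rw [hs]; exact mem_image_of_mem γ ht₀
      have hda : dist a₀ (γ (dist a₀ x)) = dist a₀ x := by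
        have h3 := hiso 0 ⟨le_refl _, dist_nonneg⟩ _ ht₀
        rw [h0] at h3
        rw [h3, abs_sub_comm, sub_zero, abs_of_nonneg dist_nonneg]
      have hdb : dist (γ (dist a₀ x)) b = dist a₀ b - dist a₀ x := by
        have h3 := hiso _ ht₀ (dist a₀ b) ⟨dist_nonneg, le_refl _⟩
        rw [hD] at h3
        rw [h3, abs_of_nonpos (by linarith [ht₀.2])]; ring
      refine ⟨γ (dist a₀ x), hmemSig a₀ ha₀ b hb hy, ?_⟩
      rcases htree a₀ b x (seg a₀ b) (seg a₀ x) (seg b x) ⟨γ, h0, hD, hiso, hs⟩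
        (hseg a₀ x) (hseg b x) hy with h1 | h1
      · have h2 := IGS.dist_of_mem (hseg a₀ x) h1
        have h4 : dist x (γ (dist a₀ x)) = dist (γ (dist a₀ x)) x := dist_comm _ _
        linarith
      · have h2 := IGS.dist_of_mem (hseg b x) h1
        have h3 : dist b (γ (dist a₀ x)) = dist (γ (dist a₀ x)) b := dist_comm _ _
        have h4 : dist x (γ (dist a₀ x)) = dist (γ (dist a₀ x)) x := dist_comm _ _
        have h5 : dist b x = dist x b := dist_comm _ _
        linarith
  have htreeS : IsMetricTree Sig := by
    constructor
    · intro x x'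
      obtain ⟨s, hsg, hss⟩ := hgeosub (x : X) x.2 (x' : X) x'.2
      obtain ⟨s', hs', _⟩ := IGS.lift hsg hss
      exact ⟨s', hs'⟩
    · intro x y z sxy sxz syz h1 h2 h3 p hp
      rcases htree (x:X) (y:X) (z:X) _ _ _ (IGS.proj h1) (IGS.proj h2) (IGS.proj h3)
        (mem_image_of_mem _ hp) with h | h
      · obtain ⟨q, hq, hqe⟩ := h
        exact Or.inl ((Subtype.coe_injective hqe) ▸ hq)
      · obtain ⟨q, hq, hqe⟩ := h
        exact Or.inr ((Subtype.coe_injective hqe) ▸ hq)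
  have hstrict : StrictlySpans {z : Sig | (z : X) ∈ A} := by
    intro x x'
    obtain ⟨b, hb, c, hc, hx'⟩ := hSigmem (x' : X) x'.2
    rcases htree b c (x : X) (seg b c) (seg b (x:X)) (seg c (x:X)) (hseg b c)
      (hseg b (x:X)) (hseg c (x:X)) hx' with h | h
    · have hd := IGS.dist_of_mem (hseg b (x:X)) h
      refine ⟨⟨b, hA_Sig hb⟩, hb, ?_⟩
      rw [Subtype.dist_eq, Subtype.dist_eq, Subtype.dist_eq]
      have e1 : dist (x:X) (x':X) = dist (x':X) (x:X) := dist_comm _ _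
      have e2 : dist (x':X) b = dist b (x':X) := dist_comm _ _
      have e3 : dist (x:X) b = dist b (x:X) := dist_comm _ _
      show dist (x:X) (x':X) + dist (x':X) b = dist (x:X) b
      linarith
    · have hd := IGS.dist_of_mem (hseg c (x:X)) h
      refine ⟨⟨c, hA_Sig hc⟩, hc, ?_⟩
      rw [Subtype.dist_eq, Subtype.dist_eq, Subtype.dist_eq]
      have e1 : dist (x:X) (x':X) = dist (x':X) (x:X) := dist_comm _ _
      have e2 : dist (x':X) c = dist c (x':X) := dist_comm _ _
      have e3 : dist (x:X) c = dist c (x:X) := dist_comm _ _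
      show dist (x:X) (x':X) + dist (x':X) c = dist (x:X) c
      linarith
  exact ⟨Sig, hdense, hA_Sig, hgeosub, htreeS, hstrict⟩
end

section
/- If f : ℝ × [0,4] → ℝ is an ε-roughly isometric map, where ℝ × [0,4] ⊆ ℝ² carries the l¹ metric d((s,t),(s',t')) = |s − s'| + |t − t'|, then ε ≥ 4. -/
open Metric Set
open scoped ENNReal

/-- The plane with the `l¹` metric, `d((s,t),(s',t')) = |s−s'| + |t−t'|`. -/
abbrev L1Plane : Type := WithLp 1 (ℝ × ℝ)

/-- The strip `ℝ × [0,4]` inside the `l¹` plane. -/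
def L1Strip : Set L1Plane := {p | (WithLp.equiv 1 (ℝ × ℝ) p).2 ∈ Set.Icc (0:ℝ) 4}

/-- Build a point of the strip. -/
def mkPt (s t : ℝ) (h : t ∈ Set.Icc (0:ℝ) 4) : L1Strip :=
  ⟨(WithLp.equiv 1 (ℝ × ℝ)).symm (s, t), by simpa [L1Strip] using h⟩

lemma mkPt_dist (s t s' t' : ℝ) (h : t ∈ Set.Icc (0:ℝ) 4) (h' : t' ∈ Set.Icc (0:ℝ) 4) :
    dist (mkPt s t h) (mkPt s' t' h') = |s - s'| + |t - t'| := by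
  rw [Subtype.dist_eq, WithLp.prod_dist_eq_add (by norm_num)]
  simp [mkPt, Real.dist_eq]

/-- Chain lemma: if consecutive gaps are ≥ 104−ε in absolute value, ≤ 104+ε,
gaps over two steps are ≥ 196, and the first gap is nonnegative, then all gaps are
≥ 104−ε and the total displacement grows linearly. -/
lemma chain_lower (ε : ℝ) (hε0 : 0 ≤ ε) (hε4 : ε < 4) (g : ℕ → ℝ)
    (h1 : ∀ k, 104 - ε ≤ |g (k+1) - g k|)
    (h1' : ∀ k, |g (k+1) - g k| ≤ 104 + ε)
    (h2 : ∀ k, 196 ≤ |g (k+2) - g k|)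
    (hpos : 0 ≤ g 1 - g 0) :
    ∀ k : ℕ, (k : ℝ) * (104 - ε) ≤ g k - g 0 := by
  have step : ∀ k, 104 - ε ≤ g (k+1) - g k := by
    intro k
    induction k with
    | zero =>
      have := h1 0
      rw [abs_of_nonneg hpos] at this
      exact this
    | succ n ih =>
      by_contra hlt
      push_neg at hlt
      have habs := h1 (n+1)
      have habs' := h1' (n+1)
      have hneg : g (n+2) - g (n+1) ≤ -(104 - ε) := by
        rcases le_or_gt (g (n+2) - g (n+1)) 0 with hc | hc
        · have : 104 - ε ≤ -(g (n+2) - g (n+1)) := by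
            rwa [abs_of_nonpos hc] at habs
          linarith
        · rw [abs_of_pos hc] at habs; linarith
      have hup : g (n+2) - g (n+1) ≥ -(104 + ε) := by
        have := (abs_le.mp habs').1; linarith
      have hprevup : g (n+1) - g n ≤ 104 + ε := (abs_le.mp (h1' n)).2
      have hsum := h2 n
      have hsum' : g (n+2) - g n = (g (n+2) - g (n+1)) + (g (n+1) - g n) := by ring
      have : |g (n+2) - g n| ≤ 2 * ε := by
        rw [hsum', abs_le]; constructor <;> nlinarith
      linarith
  intro k
  induction k with
  | zero => simp
  | succ n ih =>
    have := step n
    push_cast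
    push_cast at ih
    nlinarith

/-- Any `ε`-roughly isometric map from the `l¹` strip `ℝ × [0,4]` to `ℝ` has `ε ≥ 4`. -/
theorem four_le_eps_of_roughIsom_strip_to_real (ε : ℝ) (f : L1Strip → ℝ)
    (hf : RoughIsom ε f) : 4 ≤ ε := by
  by_contra hlt
  push_neg at hlt
  -- ε ≥ 0
  have hmem0 : (0:ℝ) ∈ Set.Icc (0:ℝ) 4 := by norm_num
  have hε0 : 0 ≤ ε := by
    have := hf (mkPt 0 0 hmem0) (mkPt 0 0 hmem0)
    simpa using this
  -- pick N with N * (4 - ε) > 4 + ε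
  obtain ⟨N, hN⟩ := exists_nat_gt ((4 + ε) / (4 - ε))
  have h4ε : 0 < 4 - ε := by linarith
  have hN' : 4 + ε < (N : ℝ) * (4 - ε) := by
    rw [div_lt_iff₀ h4ε] at hN; linarith
  -- the zigzag points
  set t : ℕ → ℝ := fun k => if Even k then 0 else 4 with ht_def
  have ht : ∀ k, t k ∈ Set.Icc (0:ℝ) 4 := by
    intro k; simp only [ht_def]; split <;> norm_num
  set z : ℕ → L1Strip := fun k => mkPt (100 * k) (t k) (ht k) with hz_def
  set W : ℕ → ℝ := fun k => f (z k) with hW_def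
  have ht_succ : ∀ k, |t (k+1) - t k| = 4 := by
    intro k
    simp only [ht_def]
    by_cases he : Even k
    · rw [if_pos he, if_neg (fun h => (Nat.even_add_one.mp h) he)]
      norm_num
    · rw [if_neg he, if_pos (Nat.even_add_one.mpr he)]
      norm_num
  have hE2 : ∀ k : ℕ, Even (k+2) ↔ Even k := by
    intro k; rw [Nat.even_iff, Nat.even_iff]; omega
  have ht2 : ∀ k, t (k+2) = t k := by
    intro k
    simp only [ht_def]
    by_cases he : Even k
    · rw [if_pos ((hE2 k).mpr he), if_pos he]
    · rw [if_neg (fun h => he ((hE2 k).mp h)), if_neg he]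
  have hd1 : ∀ k, dist (z (k+1)) (z k) = 104 := by
    intro k
    rw [hz_def]
    simp only
    rw [mkPt_dist, ht_succ]
    push_cast
    rw [show (100:ℝ) * (k+1) - 100 * k = 100 by ring,
      abs_of_nonneg (by norm_num : (0:ℝ) ≤ 100)]
    norm_num
  have hd2 : ∀ k, dist (z (k+2)) (z k) = 200 := by
    intro k
    rw [hz_def]
    simp only
    rw [mkPt_dist, ht2]
    push_cast
    rw [show (100:ℝ) * (k+2) - 100 * k = 200 by ring,
      abs_of_nonneg (by norm_num : (0:ℝ) ≤ 200)]
    simp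
  have hdN : dist (z N) (z 0) ≤ 100 * N + 4 := by
    rw [hz_def]
    simp only
    rw [mkPt_dist]
    have h0 := ht 0
    have hN0 := ht N
    have habs : |t N - t 0| ≤ 4 := by
      rw [abs_le]
      constructor
      · linarith [hN0.1, h0.2]
      · linarith [hN0.2, h0.1]
    have habs2 : |(100:ℝ) * (N:ℕ) - 100 * ((0:ℕ):ℝ)| = 100 * N := by
      rw [Nat.cast_zero, mul_zero, sub_zero, abs_of_nonneg (by positivity)]
    rw [habs2]
    linarith
  -- translate rough isometry bounds
  have h1 : ∀ k, 104 - ε ≤ |W (k+1) - W k| := by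
    intro k
    have h := abs_le.mp (hf (z (k+1)) (z k))
    rw [hd1 k, Real.dist_eq] at h
    simp only [hW_def]
    linarith [h.1]
  have h1' : ∀ k, |W (k+1) - W k| ≤ 104 + ε := by
    intro k
    have h := abs_le.mp (hf (z (k+1)) (z k))
    rw [hd1 k, Real.dist_eq] at h
    simp only [hW_def]
    linarith [h.2]
  have h2 : ∀ k, 196 ≤ |W (k+2) - W k| := by
    intro k
    have h := abs_le.mp (hf (z (k+2)) (z k))
    rw [hd2 k, Real.dist_eq] at h
    simp only [hW_def]
    linarith [h.1]
  have h3 : |W N - W 0| ≤ 100 * N + 4 + ε := by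
    have h := abs_le.mp (hf (z N) (z 0))
    rw [Real.dist_eq] at h
    simp only [hW_def]
    linarith [h.2, hdN]
  -- apply the chain lemma, in the appropriate direction
  have key : (N : ℝ) * (104 - ε) ≤ |W N - W 0| := by
    rcases le_or_gt 0 (W 1 - W 0) with hpos | hneg
    · have := chain_lower ε hε0 hlt W h1 h1' h2 hpos N
      calc (N:ℝ) * (104 - ε) ≤ W N - W 0 := this
        _ ≤ |W N - W 0| := le_abs_self _
    · have h1n : ∀ k, 104 - ε ≤ |(-W (k+1)) - (-W k)| := by
        intro k; rw [show (-W (k+1)) - (-W k) = -(W (k+1) - W k) by ring, abs_neg]; exact h1 k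
      have h1n' : ∀ k, |(-W (k+1)) - (-W k)| ≤ 104 + ε := by
        intro k; rw [show (-W (k+1)) - (-W k) = -(W (k+1) - W k) by ring, abs_neg]; exact h1' k
      have h2n : ∀ k, 196 ≤ |(-W (k+2)) - (-W k)| := by
        intro k; rw [show (-W (k+2)) - (-W k) = -(W (k+2) - W k) by ring, abs_neg]; exact h2 k
      have hposn : 0 ≤ (fun k => -W k) 1 - (fun k => -W k) 0 := by
        simp only; linarith
      have := chain_lower ε hε0 hlt (fun k => -W k) h1n h1n' h2n hposn N
      calc (N:ℝ) * (104 - ε) ≤ -W N - -W 0 := this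
        _ = -(W N - W 0) := by ring
        _ ≤ |W N - W 0| := neg_le_abs _
  nlinarith [key, h3, hN']
end
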